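/- arXiv:1109.4976 — 7 statements merged into one kernel-verified Lean document; each statement's English description precedes it below -/
import Mathlib

section
/- For all n ≥ 0, the generating function for the major index over permutations of {1,…,n} avoiding the pattern 132 equals the generating function for the major index over permutations of {1,…,n} avoiding the pattern 231; that is, Σ_{σ ∈ Av_n(132)} q^{maj σ} = Σ_{σ ∈ Av_n(231)} q^{maj σ}. -/
open scoped Classical

/-- `σ` contains the pattern `π`. -/
def permContains {n k : ℕ} (σ : Equiv.Perm (Fin n)) (π : Equiv.Perm (Fin k)) : Prop :=
  ∃ f : Fin k → Fin n, StrictMono f ∧ ∀ i j : Fin k, π i < π j ↔ σ (f i) < σ (f j)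

/-- `σ` avoids the pattern `π`. -/
def permAvoids {n k : ℕ} (σ : Equiv.Perm (Fin n)) (π : Equiv.Perm (Fin k)) : Prop :=
  ¬ permContains σ π

def p123 : Equiv.Perm (Fin 3) := 1
def p132 : Equiv.Perm (Fin 3) := Equiv.swap 1 2
def p213 : Equiv.Perm (Fin 3) := Equiv.swap 0 1
def p231 : Equiv.Perm (Fin 3) := finRotate 3
def p312 : Equiv.Perm (Fin 3) := (finRotate 3)⁻¹
def p321 : Equiv.Perm (Fin 3) := Equiv.swap 0 2

/-- Descent set of a permutation, as a set of (1-based) positions `i` with `a_i > a_{i+1}`. -/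
def desSet {n : ℕ} (σ : Equiv.Perm (Fin n)) : Finset ℕ :=
  (Finset.Ico 1 n).filter
    (fun i => ∀ h : i < n, σ ⟨i, h⟩ < σ ⟨i - 1, Nat.lt_of_le_of_lt (Nat.sub_le i 1) h⟩)

/-- Major index: sum of descent positions. -/
def majIdx {n : ℕ} (σ : Equiv.Perm (Fin n)) : ℕ := ∑ i ∈ desSet σ, i

/-- Number of descents. -/
def desNum {n : ℕ} (σ : Equiv.Perm (Fin n)) : ℕ := (desSet σ).card

/-- Number of inversions. -/
def invNum {n : ℕ} (σ : Equiv.Perm (Fin n)) : ℕ :=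
  ((Finset.univ : Finset (Fin n × Fin n)).filter (fun p => p.1 < p.2 ∧ σ p.2 < σ p.1)).card

/-!
Split a permutation of `{0, …, n}` at its largest entry, `l = a ++ n :: b`. The patterns 132 and
231 both have their largest letter in the middle, so `l` avoids one of them iff `a` and `b` avoid it
and no occurrence uses `n`: for 132 every entry of `a` must exceed every entry of `b`, for 231 every
entry of `a` must be smaller than every entry of `b`. Either way `a` and `b` are, after shifting
their values, avoiders of sizes `i + j = n`. Since
`maj (a ++ n :: b) = maj a + maj b + (i + 1) * (des b + 1)` (for `b ≠ []`) only sees the relative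
orders inside `a` and inside `b`, the sums of `q ^ maj * t ^ des` over both classes satisfy the
same recursion in `n`, hence agree; `t = 1` gives the theorem.
-/

namespace List

theorem sublist_ofFn_iff {α : Type*} {n : ℕ} {l : List α} {g : Fin n → α} :
    l <+ ofFn g ↔ ∃ f : Fin l.length → Fin n, StrictMono f ∧ ∀ i, l[i] = g (f i) := by
  rw [sublist_iff_exists_fin_orderEmbedding_get_eq]
  constructor
  · rintro ⟨f, hf⟩
    exact ⟨Fin.cast length_ofFn ∘ f, (Fin.castOrderIso length_ofFn).strictMono.comp f.strictMono,
      fun i => by simpa [Fin.cast] using hf i⟩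
  · rintro ⟨f, hmono, hf⟩
    refine ⟨OrderEmbedding.ofStrictMono (Fin.cast length_ofFn.symm ∘ f)
      ((Fin.castOrderIso length_ofFn.symm).strictMono.comp hmono), fun i => ?_⟩
    rw [get_ofFn]
    exact hf i

variable {α β : Type*} [LinearOrder α] [LinearOrder β]

def des : List α → ℕ
  | x :: y :: l => (if y < x then 1 else 0) + des (y :: l)
  | _ => 0

-- The descents of `x :: l` are those of `l` moved one place to the right, plus possibly `1`.
def maj : List α → ℕ
  | [] => 0
  | x :: l => des (x :: l) + maj l

@[simp] theorem des_nil : des ([] : List α) = 0 := rfl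

@[simp] theorem des_singleton (x : α) : des [x] = 0 := rfl

theorem des_cons_cons (x y : α) (l : List α) :
    des (x :: y :: l) = (if y < x then 1 else 0) + des (y :: l) := rfl

@[simp] theorem maj_nil : maj ([] : List α) = 0 := rfl

theorem maj_cons (x : α) (l : List α) : maj (x :: l) = des (x :: l) + maj l := rfl

theorem des_map {f : α → β} (hf : StrictMono f) (l : List α) : des (l.map f) = des l := by
  induction l with
  | nil => rfl
  | cons x l ih =>
    cases l with
    | nil => rfl
    | cons y l => simp only [map_cons, des_cons_cons, hf.lt_iff_lt, ← ih]

theorem maj_map {f : α → β} (hf : StrictMono f) (l : List α) : maj (l.map f) = maj l := by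
  induction l with
  | nil => rfl
  | cons x l ih => rw [map_cons, maj_cons, maj_cons, ← map_cons, des_map hf, ih]

theorem des_append_cons {a : List α} {M : α} (ha : ∀ x ∈ a, x < M) (b : List α) :
    des (a ++ M :: b) = des a + des (M :: b) := by
  induction a with
  | nil => simp
  | cons x a ih =>
    cases a with
    | nil => simp [des_cons_cons, not_lt_of_gt (ha x mem_cons_self)]
    | cons y a =>
      rw [cons_append, cons_append, des_cons_cons, ← cons_append,
        ih fun z hz => ha z (mem_cons_of_mem _ hz), des_cons_cons, add_assoc]

theorem maj_append_cons {a : List α} {M : α} (ha : ∀ x ∈ a, x < M) (b : List α) :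
    maj (a ++ M :: b) = maj a + maj (M :: b) + a.length * des (M :: b) := by
  induction a with
  | nil => simp
  | cons x a ih =>
    rw [cons_append, maj_cons, ← cons_append, des_append_cons ha,
      ih fun z hz => ha z (mem_cons_of_mem _ hz), maj_cons x a, length_cons]
    ring

theorem des_cons_of_forall_lt {M : α} {b : List α} (hb : ∀ y ∈ b, y < M) :
    des (M :: b) = if b = [] then 0 else des b + 1 := by
  cases b with
  | nil => rfl
  | cons y b => simp [des_cons_cons, hb y mem_cons_self, add_comm]

theorem pow_maj_mul_pow_des_append_cons {R : Type*} [CommSemiring R] (q t : R) {a b : List α}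
    {M : α} (ha : ∀ x ∈ a, x < M) (hb : ∀ y ∈ b, y < M) :
    q ^ maj (a ++ M :: b) * t ^ des (a ++ M :: b) = q ^ maj a * t ^ des a *
      if b = [] then 1
      else q ^ (a.length + 1) * t * (q ^ maj b * (q ^ (a.length + 1) * t) ^ des b) := by
  rw [maj_append_cons ha, des_append_cons ha, maj_cons, des_cons_of_forall_lt hb]
  split_ifs with h
  · simp [h]
  · ring

theorem des_ofFn : ∀ {n : ℕ} (g : Fin (n + 1) → α),
    des (ofFn g) = ∑ i : Fin n, if g i.succ < g i.castSucc then 1 else 0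
  | 0, _ => rfl
  | n + 1, g => by
    have h := des_ofFn fun i => g i.succ
    rw [ofFn_succ] at h
    rw [ofFn_succ, ofFn_succ, des_cons_cons, h, Fin.sum_univ_succ]
    rfl

theorem maj_ofFn : ∀ {n : ℕ} (g : Fin (n + 1) → α),
    maj (ofFn g) = ∑ i : Fin n, if g i.succ < g i.castSucc then (i : ℕ) + 1 else 0
  | 0, _ => rfl
  | n + 1, g => by
    rw [ofFn_succ, maj_cons, ← ofFn_succ, des_ofFn, maj_ofFn, Fin.sum_univ_succ,
      Fin.sum_univ_succ, add_assoc, ← Finset.sum_add_distrib]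
    refine congrArg₂ (· + ·) (by split_ifs <;> rfl) (Finset.sum_congr rfl fun i _ => ?_)
    simp only [Fin.succ_castSucc, Fin.val_succ]
    split_ifs <;> omega

-- `r = (· < ·)` gives the pattern 132 and `r = (· > ·)` the pattern 231.
def ContainsPeakPattern (r : α → α → Prop) (l : List α) : Prop :=
  ∃ x y z, [x, y, z] <+ l ∧ x < y ∧ z < y ∧ r x z

theorem containsPeakPattern_map {r : α → α → Prop} {f : α → α} (hf : StrictMono f)
    (hr : ∀ x y, r (f x) (f y) ↔ r x y) (l : List α) :
    (l.map f).ContainsPeakPattern r ↔ l.ContainsPeakPattern r := by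
  constructor
  · rintro ⟨x, y, z, hs, hxy, hzy, hxz⟩
    obtain ⟨l', hl', h⟩ := sublist_map_iff.1 hs
    obtain ⟨x', y', z', rfl⟩ : ∃ x' y' z', l' = [x', y', z'] := by
      rcases l' with _ | ⟨x', _ | ⟨y', _ | ⟨z', _ | ⟨_, _⟩⟩⟩⟩ <;> simp_all
    simp only [map_cons, map_nil, cons.injEq, and_true] at h
    obtain ⟨rfl, rfl, rfl⟩ := h
    exact ⟨x', y', z', hl', hf.lt_iff_lt.1 hxy, hf.lt_iff_lt.1 hzy, (hr _ _).1 hxz⟩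
  · rintro ⟨x, y, z, hs, hxy, hzy, hxz⟩
    exact ⟨f x, f y, f z, hs.map f, hf hxy, hf hzy, (hr _ _).2 hxz⟩

theorem containsPeakPattern_append_cons {r : α → α → Prop} {a b : List α} {M : α}
    (ha : ∀ x ∈ a, x < M) (hb : ∀ y ∈ b, y < M) :
    (a ++ M :: b).ContainsPeakPattern r ↔
      a.ContainsPeakPattern r ∨ b.ContainsPeakPattern r ∨ ∃ x ∈ a, ∃ z ∈ b, r x z := by
  constructor
  · rintro ⟨x, y, z, hs, hxy, hzy, hxz⟩
    obtain ⟨l₁, l₂, hl, h₁, h₂⟩ := sublist_append_iff.1 hs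
    rcases l₁ with _ | ⟨u, _ | ⟨v, _ | ⟨w, _ | ⟨_, _⟩⟩⟩⟩ <;>
      simp only [nil_append, cons_append, cons.injEq, reduceCtorEq, and_false] at hl
    · subst hl
      rcases sublist_cons_iff.1 h₂ with h | ⟨_, ⟨rfl, rfl⟩, h⟩
      · exact Or.inr (Or.inl ⟨x, y, z, h, hxy, hzy, hxz⟩)
      · exact absurd (hxy.trans (hb y (h.subset (by simp)))) (lt_irrefl _)
    · obtain ⟨rfl, rfl⟩ := hl
      have hz : z ∈ b := by
        rcases sublist_cons_iff.1 h₂ with h | ⟨_, ⟨rfl, rfl⟩, h⟩ <;> exact h.subset (by simp)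
      exact Or.inr (Or.inr ⟨x, h₁.subset (by simp), z, hz, hxz⟩)
    · obtain ⟨rfl, rfl, rfl⟩ := hl
      rcases sublist_cons_iff.1 h₂ with h | ⟨_, ⟨rfl, rfl⟩, h⟩
      · exact Or.inr (Or.inr ⟨x, h₁.subset (by simp), z, h.subset (by simp), hxz⟩)
      · exact absurd (hzy.trans (ha y (h₁.subset (by simp)))) (lt_irrefl _)
    · obtain ⟨rfl, rfl, rfl, rfl⟩ := hl
      exact Or.inl ⟨x, y, z, h₁, hxy, hzy, hxz⟩
  · rintro (⟨x, y, z, hs, h⟩ | ⟨x, y, z, hs, h⟩ | ⟨x, hx, z, hz, hxz⟩)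
    · exact ⟨x, y, z, hs.trans (sublist_append_left _ _), h⟩
    · exact ⟨x, y, z, hs.trans ((sublist_cons_self _ _).trans (sublist_append_right _ _)), h⟩
    · refine ⟨x, M, z, ?_, ha x hx, hb z hz, hxz⟩
      exact (singleton_sublist.2 hx).append (cons_sublist_cons.2 (singleton_sublist.2 hz))

theorem containsPeakPattern_ofFn_iff {r : α → α → Prop} {n : ℕ} {g : Fin n → α} :
    (ofFn g).ContainsPeakPattern r ↔ ∃ f : Fin 3 → Fin n, StrictMono f ∧
      g (f 0) < g (f 1) ∧ g (f 2) < g (f 1) ∧ r (g (f 0)) (g (f 2)) := by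
  constructor
  · rintro ⟨x, y, z, hs, h⟩
    obtain ⟨f, hf, hfg⟩ := sublist_ofFn_iff.1 hs
    refine ⟨f, hf, ?_⟩
    rwa [← show x = g (f 0) from hfg 0, ← show y = g (f 1) from hfg 1,
      ← show z = g (f 2) from hfg 2]
  · rintro ⟨f, hf, h⟩
    exact ⟨_, _, _, sublist_ofFn_iff.2 ⟨f, hf, by simp [Fin.forall_fin_succ]⟩, h⟩

-- Sorting both blocks yields a sorted permutation of `range n`, that is, `range n` itself.
theorem perm_range_of_append_perm_range {l₁ l₂ : List ℕ} {n : ℕ} (h : l₁ ++ l₂ ~ range n)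
    (hlt : ∀ x ∈ l₁, ∀ y ∈ l₂, x < y) :
    l₁ ~ range l₁.length ∧ l₂ ~ (range l₂.length).map (l₁.length + ·) := by
  set s₁ := l₁.mergeSort (· ≤ ·)
  set s₂ := l₂.mergeSort (· ≤ ·)
  have hs : s₁ ++ s₂ = range (l₁.length + l₂.length) := by
    refine Perm.eq_of_pairwise' (r := (· ≤ ·)) ?_ pairwise_le_range ?_
    · refine pairwise_append.2 ⟨pairwise_mergeSort' _ _, pairwise_mergeSort' _ _, ?_⟩
      intro x hx y hy
      exact (hlt x ((mergeSort_perm _ _).subset hx) y ((mergeSort_perm _ _).subset hy)).le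
    · rw [show l₁.length + l₂.length = n by simpa using h.length_eq]
      exact ((mergeSort_perm _ _).append (mergeSort_perm _ _)).trans h
  rw [range_add] at hs
  obtain ⟨h₁, h₂⟩ := append_inj hs (by simp [s₁])
  exact ⟨h₁ ▸ (mergeSort_perm l₁ _).symm, h₂ ▸ (mergeSort_perm l₂ _).symm⟩

theorem exists_perm_range_eq_map_add {l : List ℕ} {k m : ℕ} (h : l ~ (range m).map (k + ·)) :
    ∃ b, b ~ range m ∧ l = b.map (· + k) := by
  refine ⟨l.map (· - k), ?_, ?_⟩
  · simpa [Function.comp_def] using h.map (· - k)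
  · rw [map_map]
    refine (map_congr_left fun x hx => ?_).trans (map_id _) |>.symm
    obtain ⟨y, -, rfl⟩ := mem_map.1 (h.subset hx)
    simp [add_comm]

theorem append_map_add_perm_range {a b : List ℕ} {i j : ℕ} (ha : a ~ range i)
    (hb : b ~ range j) : a ++ b.map (· + i) ~ range (i + j) := by
  rw [range_add]
  exact ha.append (by simpa [add_comm] using hb.map (· + i))

theorem append_cons_perm_range_succ_iff {a b : List ℕ} {n : ℕ} :
    a ++ n :: b ~ range (n + 1) ↔ a ++ b ~ range n := by
  rw [range_succ, perm_middle.congr_left, (perm_append_singleton n _).congr_right, perm_cons]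

theorem forall_lt_of_append_cons_perm_range {a b : List ℕ} {n : ℕ}
    (h : a ++ n :: b ~ range (n + 1)) : (∀ x ∈ a, x < n) ∧ ∀ x ∈ b, x < n := by
  have h' := append_cons_perm_range_succ_iff.1 h
  exact ⟨fun x hx => by simpa using h'.subset (mem_append_left _ hx),
    fun x hx => by simpa using h'.subset (mem_append_right _ hx)⟩

end List

open Finset

noncomputable def peakAvoiders (r : ℕ → ℕ → Prop) (n : ℕ) : Finset (List ℕ) :=
  (List.range n).permutations.toFinset.filter fun l => ¬ l.ContainsPeakPattern r

theorem mem_peakAvoiders {r : ℕ → ℕ → Prop} {n : ℕ} {l : List ℕ} :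
    l ∈ peakAvoiders r n ↔ l.Perm (List.range n) ∧ ¬ l.ContainsPeakPattern r := by
  simp [peakAvoiders, List.mem_permutations]

theorem length_of_mem_peakAvoiders {r : ℕ → ℕ → Prop} {n : ℕ} {l : List ℕ}
    (h : l ∈ peakAvoiders r n) : l.length = n := by
  simpa using (mem_peakAvoiders.1 h).1.length_eq

theorem peakAvoiders_zero (r : ℕ → ℕ → Prop) : peakAvoiders r 0 = {[]} := by
  ext l
  simp only [mem_peakAvoiders, List.range_zero, List.perm_nil, mem_singleton,
    and_iff_left_iff_imp]
  rintro rfl ⟨x, y, z, h, -⟩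
  simpa using h.length_le

theorem append_cons_mem_peakAvoiders_succ_iff {r : ℕ → ℕ → Prop} {n : ℕ} {a b : List ℕ} :
    a ++ n :: b ∈ peakAvoiders r (n + 1) ↔ (a ++ b).Perm (List.range n) ∧
      ¬ a.ContainsPeakPattern r ∧ ¬ b.ContainsPeakPattern r ∧ ∀ x ∈ a, ∀ z ∈ b, ¬ r x z := by
  rw [mem_peakAvoiders, List.append_cons_perm_range_succ_iff]
  refine and_congr_right fun h => ?_
  obtain ⟨ha, hb⟩ :=
    List.forall_lt_of_append_cons_perm_range (List.append_cons_perm_range_succ_iff.2 h)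
  rw [List.containsPeakPattern_append_cons ha hb]
  simp only [not_or, not_exists, not_and]

noncomputable def majDesSum {R : Type*} [CommSemiring R] (r : ℕ → ℕ → Prop) (n : ℕ)
    (q t : R) : R :=
  ∑ l ∈ peakAvoiders r n, q ^ l.maj * t ^ l.des

theorem majDesSum_zero {R : Type*} [CommSemiring R] (r : ℕ → ℕ → Prop) (q t : R) :
    majDesSum r 0 q t = 1 := by
  simp [majDesSum, peakAvoiders_zero]

theorem sum_sum_pow_maj_mul_pow_des_append_cons {R : Type*} [CommSemiring R]
    {r : ℕ → ℕ → Prop} {i j M c₁ c₂ : ℕ}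
    (hlt : ∀ a ∈ peakAvoiders r i, ∀ b ∈ peakAvoiders r j,
      (∀ y ∈ a.map (· + c₁), y < M) ∧ ∀ y ∈ b.map (· + c₂), y < M) (q t : R) :
    ∑ a ∈ peakAvoiders r i, ∑ b ∈ peakAvoiders r j,
      q ^ (a.map (· + c₁) ++ M :: b.map (· + c₂)).maj *
        t ^ (a.map (· + c₁) ++ M :: b.map (· + c₂)).des =
      majDesSum r i q t *
        if j = 0 then 1 else q ^ (i + 1) * t * majDesSum r j q (q ^ (i + 1) * t) := by
  have hweight : ∀ a ∈ peakAvoiders r i, ∀ b ∈ peakAvoiders r j,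
      q ^ (a.map (· + c₁) ++ M :: b.map (· + c₂)).maj *
        t ^ (a.map (· + c₁) ++ M :: b.map (· + c₂)).des = q ^ a.maj * t ^ a.des *
          if b = [] then 1 else q ^ (i + 1) * t * (q ^ b.maj * (q ^ (i + 1) * t) ^ b.des) := by
    intro a ha b hb
    obtain ⟨hA, hB⟩ := hlt a ha b hb
    rw [List.pow_maj_mul_pow_des_append_cons q t hA hB]
    simp only [List.maj_map add_left_strictMono, List.des_map add_left_strictMono,
      List.length_map, List.map_eq_nil_iff, length_of_mem_peakAvoiders ha]
  rw [sum_congr rfl fun a ha => sum_congr rfl (hweight a ha), ← sum_mul_sum]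
  congr 1
  split_ifs with h
  · simp [h, peakAvoiders_zero]
  · rw [majDesSum, mul_sum]
    refine sum_congr rfl fun b hb => if_neg ?_
    rintro rfl
    exact h (length_of_mem_peakAvoiders hb).symm

theorem majDesSum_succ {R : Type*} [CommSemiring R] {r : ℕ → ℕ → Prop} {n : ℕ}
    (c₁ c₂ : ℕ × ℕ → ℕ)
    (hdecomp : ∀ l, l ∈ peakAvoiders r (n + 1) ↔ ∃ p ∈ antidiagonal n,
      ∃ a ∈ peakAvoiders r p.1, ∃ b ∈ peakAvoiders r p.2,
        l = a.map (· + c₁ p) ++ n :: b.map (· + c₂ p))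
    (q t : R) :
    majDesSum r (n + 1) q t = ∑ p ∈ antidiagonal n, majDesSum r p.1 q t *
      if p.2 = 0 then 1 else q ^ (p.1 + 1) * t * majDesSum r p.2 q (q ^ (p.1 + 1) * t) := by
  set S := (antidiagonal n).sigma fun p => peakAvoiders r p.1 ×ˢ peakAvoiders r p.2
  set join : (_ : ℕ × ℕ) × List ℕ × List ℕ → List ℕ :=
    fun x => x.2.1.map (· + c₁ x.1) ++ n :: x.2.2.map (· + c₂ x.1)
  have himage : peakAvoiders r (n + 1) = S.image join := by
    ext l
    simp only [hdecomp, S, join, mem_image, mem_sigma, mem_product, Sigma.exists, Prod.exists,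
      and_assoc, exists_and_left, eq_comm]
  have hlt : ∀ x ∈ S,
      (∀ y ∈ x.2.1.map (· + c₁ x.1), y < n) ∧ ∀ y ∈ x.2.2.map (· + c₂ x.1), y < n :=
    fun x hx => List.forall_lt_of_append_cons_perm_range
      (mem_peakAvoiders.1 (himage ▸ mem_image_of_mem join hx)).1
  have hinj : Set.InjOn join S := by
    intro x hx x' hx' h
    obtain ⟨hA, -, hB⟩ := (List.append_cons_inj_of_notMem
      (fun h => (hlt x hx).1 n h |>.false) (fun h => (hlt x hx).2 n h |>.false)).1 h
    simp only [coe_sigma, Set.mem_sigma_iff, mem_coe, mem_product,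
      HasAntidiagonal.mem_antidiagonal, S] at hx hx'
    obtain ⟨p, a, b⟩ := x
    obtain ⟨p', a', b'⟩ := x'
    dsimp only at hx hx' hA hB
    obtain rfl : p = p' := by
      have := congrArg List.length hA
      simp only [List.length_map, length_of_mem_peakAvoiders hx.2.1,
        length_of_mem_peakAvoiders hx'.2.1] at this
      ext <;> omega
    simp only [List.map_inj_right (add_left_injective _)] at hA hB
    rw [hA, hB]
  rw [majDesSum, himage, sum_image hinj, sum_sigma]
  refine sum_congr rfl fun p hp => ?_
  rw [sum_product]
  refine sum_sum_pow_maj_mul_pow_des_append_cons (M := n) (c₁ := c₁ p) (c₂ := c₂ p) ?_ q t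
  exact fun a ha b hb => hlt ⟨p, a, b⟩ (mem_sigma.2 ⟨hp, mem_product.2 ⟨ha, hb⟩⟩)

theorem mem_peakAvoiders_lt_succ {n : ℕ} {l : List ℕ} :
    l ∈ peakAvoiders (· < ·) (n + 1) ↔ ∃ p ∈ antidiagonal n, ∃ a ∈ peakAvoiders (· < ·) p.1,
      ∃ b ∈ peakAvoiders (· < ·) p.2, l = a.map (· + p.2) ++ n :: b := by
  have hshift (a : List ℕ) (c : ℕ) :=
    List.containsPeakPattern_map (r := (· < ·)) (add_left_strictMono (a := c))
      (fun _ _ => add_lt_add_iff_right _) a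
  constructor
  · intro hl
    obtain ⟨A, B, rfl⟩ :=
      List.append_of_mem ((mem_peakAvoiders.1 hl).1.mem_iff.2 (List.mem_range.2 n.lt_succ_self))
    obtain ⟨hAB, hA, hB, hsep⟩ := append_cons_mem_peakAvoiders_succ_iff.1 hl
    have hne := (List.nodup_append.1 (hAB.nodup_iff.2 List.nodup_range)).2.2
    obtain ⟨hBperm, hAperm⟩ := List.perm_range_of_append_perm_range
      (List.perm_append_comm.trans hAB)
      fun z hz x hx => (not_lt.1 (hsep x hx z hz)).lt_of_ne' (hne x hx z hz)
    obtain ⟨a, ha, rfl⟩ := List.exists_perm_range_eq_map_add hAperm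
    refine ⟨(a.length, B.length), ?_, a, ?_, B, mem_peakAvoiders.2 ⟨hBperm, hB⟩, rfl⟩
    · simpa using hAB.length_eq
    · exact mem_peakAvoiders.2 ⟨by simpa using ha, (hshift a _).not.1 hA⟩
  · rintro ⟨⟨i, j⟩, hp, a, ha, b, hb, rfl⟩
    obtain rfl := HasAntidiagonal.mem_antidiagonal.1 hp
    obtain ⟨ha, hA⟩ := mem_peakAvoiders.1 ha
    obtain ⟨hb, hB⟩ := mem_peakAvoiders.1 hb
    refine append_cons_mem_peakAvoiders_succ_iff.2 ⟨?_, (hshift a j).not.2 hA, hB, ?_⟩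
    · exact List.perm_append_comm.trans (add_comm j i ▸ List.append_map_add_perm_range hb ha)
    · intro x hx z hz
      obtain ⟨y, -, rfl⟩ := List.mem_map.1 hx
      have := List.mem_range.1 (hb.subset hz)
      omega

theorem mem_peakAvoiders_gt_succ {n : ℕ} {l : List ℕ} :
    l ∈ peakAvoiders (· > ·) (n + 1) ↔ ∃ p ∈ antidiagonal n, ∃ a ∈ peakAvoiders (· > ·) p.1,
      ∃ b ∈ peakAvoiders (· > ·) p.2, l = a ++ n :: b.map (· + p.1) := by
  have hshift (b : List ℕ) (c : ℕ) :=
    List.containsPeakPattern_map (r := (· > ·)) (add_left_strictMono (a := c))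
      (fun _ _ => add_lt_add_iff_right _) b
  constructor
  · intro hl
    obtain ⟨A, B, rfl⟩ :=
      List.append_of_mem ((mem_peakAvoiders.1 hl).1.mem_iff.2 (List.mem_range.2 n.lt_succ_self))
    obtain ⟨hAB, hA, hB, hsep⟩ := append_cons_mem_peakAvoiders_succ_iff.1 hl
    have hne := (List.nodup_append.1 (hAB.nodup_iff.2 List.nodup_range)).2.2
    obtain ⟨hAperm, hBperm⟩ := List.perm_range_of_append_perm_range hAB
      fun x hx z hz => (not_lt.1 (hsep x hx z hz)).lt_of_ne (hne x hx z hz)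
    obtain ⟨b, hb, rfl⟩ := List.exists_perm_range_eq_map_add hBperm
    refine ⟨(A.length, b.length), ?_, A, mem_peakAvoiders.2 ⟨hAperm, hA⟩, b, ?_, rfl⟩
    · simpa [add_comm] using hAB.length_eq
    · exact mem_peakAvoiders.2 ⟨by simpa using hb, (hshift b _).not.1 hB⟩
  · rintro ⟨⟨i, j⟩, hp, a, ha, b, hb, rfl⟩
    obtain rfl := HasAntidiagonal.mem_antidiagonal.1 hp
    obtain ⟨ha, hA⟩ := mem_peakAvoiders.1 ha
    obtain ⟨hb, hB⟩ := mem_peakAvoiders.1 hb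
    refine append_cons_mem_peakAvoiders_succ_iff.2
      ⟨List.append_map_add_perm_range ha hb, hA, (hshift b i).not.2 hB, ?_⟩
    intro x hx z hz
    obtain ⟨y, -, rfl⟩ := List.mem_map.1 hz
    have := List.mem_range.1 (ha.subset hx)
    omega

theorem majDesSum_lt_eq_majDesSum_gt {R : Type*} [CommSemiring R] (n : ℕ) (q t : R) :
    majDesSum (· < ·) n q t = majDesSum (· > ·) n q t := by
  induction n using Nat.strong_induction_on generalizing t with
  | _ n ih =>
    cases n with
    | zero => rw [majDesSum_zero, majDesSum_zero]
    | succ n =>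
      rw [majDesSum_succ (fun p => p.2) (fun _ => 0)
          fun _ => by simpa using mem_peakAvoiders_lt_succ,
        majDesSum_succ (fun _ => 0) (fun p => p.1)
          fun _ => by simpa using mem_peakAvoiders_gt_succ]
      refine sum_congr rfl fun p hp => ?_
      have hp' := HasAntidiagonal.mem_antidiagonal.1 hp
      rw [ih p.1 (by omega), ih p.2 (by omega)]

def oneLine {n : ℕ} (σ : Equiv.Perm (Fin n)) : List ℕ := List.ofFn fun i => (σ i : ℕ)

theorem majIdx_eq_maj_oneLine {n : ℕ} (σ : Equiv.Perm (Fin n)) :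
    majIdx σ = (oneLine σ).maj := by
  cases n with
  | zero => rfl
  | succ n =>
    rw [oneLine, List.maj_ofFn, majIdx, desSet, sum_filter, sum_Ico_eq_sum_range,
      Nat.add_sub_cancel, sum_range]
    refine sum_congr rfl fun i _ => ?_
    simp [Fin.succ, Fin.castSucc, Fin.castAdd, Fin.castLE, add_comm]

theorem oneLine_perm_range {n : ℕ} (σ : Equiv.Perm (Fin n)) :
    (oneLine σ).Perm (List.range n) := by
  refine (List.perm_ext_iff_of_nodup (List.nodup_ofFn.2 (Fin.val_injective.comp σ.injective))
    List.nodup_range).2 fun x => ?_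
  simp only [List.mem_ofFn, List.mem_range]
  exact ⟨fun ⟨i, hi⟩ => hi ▸ (σ i).isLt, fun hx => ⟨σ.symm ⟨x, hx⟩, by simp⟩⟩

theorem oneLine_injective {n : ℕ} : Function.Injective (oneLine (n := n)) :=
  fun _ _ h => Equiv.ext fun i => Fin.ext (congrFun (List.ofFn_injective h) i)

theorem image_oneLine (n : ℕ) :
    (univ : Finset (Equiv.Perm (Fin n))).image oneLine = (List.range n).permutations.toFinset := by
  refine eq_of_subset_of_card_le (fun l hl => ?_) ?_
  · obtain ⟨σ, -, rfl⟩ := mem_image.1 hl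
    exact List.mem_toFinset.2 (List.mem_permutations.2 (oneLine_perm_range σ))
  · rw [card_image_of_injective _ oneLine_injective, card_univ, Fintype.card_perm,
      Fintype.card_fin, List.toFinset_card_of_nodup (List.nodup_permutations _ List.nodup_range),
      List.length_permutations, List.length_range]

theorem sum_filter_oneLine_eq_sum_peakAvoiders {M : Type*} [AddCommMonoid M]
    (r : ℕ → ℕ → Prop) (n : ℕ) (f : List ℕ → M) :
    ∑ σ ∈ univ.filter (fun σ : Equiv.Perm (Fin n) => ¬ (oneLine σ).ContainsPeakPattern r),
      f (oneLine σ) = ∑ l ∈ peakAvoiders r n, f l := by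
  rw [peakAvoiders, ← image_oneLine, filter_image, sum_image oneLine_injective.injOn]

theorem permContains_iff {n k : ℕ} {σ : Equiv.Perm (Fin n)} {π : Equiv.Perm (Fin k)} :
    permContains σ π ↔
      ∃ f : Fin k → Fin n, StrictMono f ∧ ∀ i j, π i < π j → σ (f i) < σ (f j) := by
  refine exists_congr fun f => and_congr_right fun _ =>
    ⟨fun h i j => (h i j).1, fun h i j => ⟨h i j, fun hσ => ?_⟩⟩
  rcases lt_trichotomy (π i) (π j) with hπ | hπ | hπ
  · exact hπ
  · exact absurd hσ (by rw [π.injective hπ]; exact lt_irrefl _)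
  · exact absurd (h j i hπ) hσ.asymm

theorem permContains_p132_iff {n : ℕ} (σ : Equiv.Perm (Fin n)) :
    permContains σ p132 ↔ (oneLine σ).ContainsPeakPattern (· < ·) := by
  rw [permContains_iff, oneLine, List.containsPeakPattern_ofFn_iff]
  refine exists_congr fun f => and_congr_right fun _ => ?_
  simp only [Fin.forall_fin_succ, IsEmpty.forall_iff, Fin.val_fin_lt, p132, Equiv.swap_apply_def]
  grind

theorem permContains_p231_iff {n : ℕ} (σ : Equiv.Perm (Fin n)) :
    permContains σ p231 ↔ (oneLine σ).ContainsPeakPattern (· > ·) := by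
  rw [permContains_iff, oneLine, List.containsPeakPattern_ofFn_iff]
  refine exists_congr fun f => and_congr_right fun _ => ?_
  simp only [Fin.forall_fin_succ, IsEmpty.forall_iff, Fin.val_fin_lt, p231, finRotate_apply]
  grind

theorem sum_filter_permAvoids_eq_majDesSum {R : Type*} [CommSemiring R] {n k : ℕ}
    {π : Equiv.Perm (Fin k)} {r : ℕ → ℕ → Prop}
    (h : ∀ σ : Equiv.Perm (Fin n), permContains σ π ↔ (oneLine σ).ContainsPeakPattern r)
    (q : R) :
    ∑ σ ∈ univ.filter (fun σ : Equiv.Perm (Fin n) => permAvoids σ π), q ^ majIdx σ =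
      majDesSum r n q 1 := by
  simp only [permAvoids, h, majIdx_eq_maj_oneLine]
  rw [sum_filter_oneLine_eq_sum_peakAvoiders r n (q ^ List.maj ·), majDesSum]
  simp

/-- 132 and 231 are maj-Wilf equivalent. -/
theorem maj_132_eq_231 (n : ℕ) (q : ℚ) :
    ∑ σ ∈ Finset.univ.filter (fun σ : Equiv.Perm (Fin n) => permAvoids σ p132), q ^ majIdx σ
      = ∑ σ ∈ Finset.univ.filter (fun σ : Equiv.Perm (Fin n) => permAvoids σ p231),
          q ^ majIdx σ := by
  rw [sum_filter_permAvoids_eq_majDesSum permContains_p132_iff,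
    sum_filter_permAvoids_eq_majDesSum permContains_p231_iff, majDesSum_lt_eq_majDesSum_gt]
end

section
/- There is a bijection f from Av_n(132) to Av_n(231) preserving the descent set: Des f(σ) = Des σ for all σ ∈ Av_n(132). -/
open scoped Classical

/-!
Read a word `u ++ M :: v` of distinct naturals with maximum `M` as a decreasing binary tree: `M`
at the root, the trees of `u` and `v` below it. Its unlabelled shape determines the descent set:
the descents are those of `u`, those of `v` (shifted), and one right after `M` when `v ≠ []`.

A word avoids 132 iff at every node all of `u` lies above all of `v`; so its values are
determined by its shape, and every shape occurs (`word132`). Reversal exchanges 132 and 231 and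
mirrors the tree, so the same holds for 231-avoiders. Sending a 132-avoider to the 231-avoider
of the same shape is therefore a bijection that preserves descent sets.
-/

open BinaryTree
open scoped List

namespace BinaryTree

variable {α : Type*}

def mirror : BinaryTree α → BinaryTree α
  | nil => nil
  | node a l r => node a r.mirror l.mirror

@[simp]
theorem mirror_mirror (t : BinaryTree α) : t.mirror.mirror = t := by
  induction t <;> simp_all [mirror]

@[simp]
theorem numNodes_mirror (t : BinaryTree α) : t.mirror.numNodes = t.numNodes := by
  induction t <;> simp_all [mirror]; omega

end BinaryTree

namespace DescentBijection

def shape (l : List ℕ) : BinaryTree Unit :=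
  match h : l.max? with
  | none => nil
  | some M => shape (l.take (l.idxOf M)) △ shape (l.drop (l.idxOf M + 1))
termination_by l.length
decreasing_by
  all_goals have := List.idxOf_lt_length_of_mem (List.max?_mem h)
  all_goals simp only [List.length_take, List.length_drop]; omega

@[simp]
theorem shape_nil : shape [] = nil := by
  simp [shape]

theorem shape_append_cons {u v : List ℕ} {M : ℕ} (hu : ∀ x ∈ u, x < M) (hv : ∀ x ∈ v, x < M) :
    shape (u ++ M :: v) = shape u △ shape v := by
  have hmax : (u ++ M :: v).max? = some M := by
    rw [List.max?_eq_some_iff]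
    grind
  have hidx : (u ++ M :: v).idxOf M = u.length := by
    rw [List.idxOf_append_of_notMem fun h => (hu M h).false]
    simp
  rw [shape, hmax]
  simp [hidx]

theorem numNodes_shape (l : List ℕ) : (shape l).numNodes = l.length := by
  induction l using shape.induct with
  | case1 l h => simp_all
  | case2 l M h ih₁ ih₂ =>
    have := List.idxOf_lt_length_of_mem (List.max?_mem h)
    rw [shape, h]
    simp only [numNodes, ih₁, ih₂, List.length_take, List.length_drop]
    omega

theorem exists_eq_append_cons_max {l : List ℕ} (hl : l.Nodup) (hne : l ≠ []) :
    ∃ u M v, l = u ++ M :: v ∧ (∀ x ∈ u, x < M) ∧ ∀ x ∈ v, x < M := by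
  obtain ⟨M, hM⟩ := Option.isSome_iff_exists.1 (List.isSome_max?_of_ne_nil hne)
  obtain ⟨hmem, hle⟩ := List.max?_eq_some_iff.1 hM
  obtain ⟨u, v, rfl⟩ := List.append_of_mem hmem
  have hM : M ∉ u ++ v := (List.nodup_cons.1 (List.nodup_middle.1 hl)).1
  refine ⟨u, M, v, rfl, fun x hx => ?_, fun x hx => ?_⟩ <;>
    exact lt_of_le_of_ne (hle x (by simp [hx])) (by rintro rfl; simp [hx] at hM)

theorem nodup_induction_on_max {P : List ℕ → Prop} (nil : P [])
    (append_cons : ∀ u M v, (∀ x ∈ u, x < M) → (∀ x ∈ v, x < M) → P u → P v → P (u ++ M :: v))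
    {l : List ℕ} (hl : l.Nodup) : P l := by
  induction hlen : l.length using Nat.strong_induction_on generalizing l with
  | _ n ih =>
    rcases eq_or_ne l [] with rfl | hne
    · exact nil
    obtain ⟨u, M, v, rfl, hu, hv⟩ := exists_eq_append_cons_max hl hne
    have hnd : u.Nodup ∧ v.Nodup := by grind
    exact append_cons u M v hu hv (ih _ (by simp [← hlen]) hnd.1 rfl)
      (ih _ (by simp [← hlen]; omega) hnd.2 rfl)

theorem shape_reverse {l : List ℕ} (hl : l.Nodup) : shape l.reverse = (shape l).mirror := by
  refine nodup_induction_on_max (P := fun l => shape l.reverse = (shape l).mirror) ?_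
    (fun u M v hu hv ihu ihv => ?_) hl
  · simp [mirror]
  · rw [shape_append_cons hu hv, List.reverse_append, List.reverse_cons, List.append_assoc,
      List.singleton_append, shape_append_cons (by simpa using hv) (by simpa using hu), ihu, ihv]
    rfl

/-- Descents of a word, at 1-based positions as in `desSet`. -/
def wordDes (l : List ℕ) : Finset ℕ :=
  (Finset.Ico 1 l.length).filter fun i => l.getD i 0 < l.getD (i - 1) 0

theorem getD_append_cons (u v : List ℕ) (M i : ℕ) :
    (u ++ M :: v).getD i 0 = if i < u.length then u.getD i 0
      else if i = u.length then M else v.getD (i - u.length - 1) 0 := by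
  split_ifs with h₁ h₂
  · exact List.getD_append _ _ _ _ h₁
  · simp [h₂]
  · obtain ⟨k, rfl⟩ : ∃ k, i = u.length + 1 + k := ⟨i - u.length - 1, by omega⟩
    rw [List.getD_append_right _ _ _ _ (by omega)]
    simp [show u.length + 1 + k - u.length = k + 1 by omega]

theorem mem_wordDes_append_cons {u v : List ℕ} {M : ℕ} (hu : ∀ x ∈ u, x < M)
    (hv : ∀ x ∈ v, x < M) (i : ℕ) :
    i ∈ wordDes (u ++ M :: v) ↔ i ∈ wordDes u ∨ (i = u.length + 1 ∧ v ≠ []) ∨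
      (u.length + 1 < i ∧ i - (u.length + 1) ∈ wordDes v) := by
  have hu' : ∀ j < u.length, u.getD j 0 < M := fun j hj => by
    rw [List.getD_eq_getElem _ _ hj]; exact hu _ (List.getElem_mem hj)
  have hv' : ∀ j < v.length, v.getD j 0 < M := fun j hj => by
    rw [List.getD_eq_getElem _ _ hj]; exact hv _ (List.getElem_mem hj)
  simp only [wordDes, Finset.mem_filter, Finset.mem_Ico, getD_append_cons, List.length_append,
    List.length_cons, ne_eq, ← List.length_eq_zero_iff]
  rcases (show i ≤ u.length ∨ i = u.length + 1 ∨ u.length + 1 < i by omega) with h | rfl | h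
  · have := hu' (i - 1)
    split_ifs <;> omega
  · have := hv' 0
    simpa [-List.getD_eq_getElem?_getD, List.length_pos_iff] using this
  · obtain ⟨j, rfl⟩ : ∃ j, i = u.length + 2 + j := ⟨i - u.length - 2, by omega⟩
    simp only [show u.length + 2 + j - (u.length + 1) = j + 1 by omega,
      show u.length + 2 + j - 1 - u.length - 1 = j by omega,
      show u.length + 2 + j - u.length - 1 = j + 1 by omega, Nat.add_sub_cancel]
    split_ifs <;> omega

theorem wordDes_eq_of_shape_eq {l l' : List ℕ} (hl : l.Nodup) (hl' : l'.Nodup)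
    (h : shape l = shape l') : wordDes l = wordDes l' := by
  refine nodup_induction_on_max (P := fun l => ∀ l', l'.Nodup → shape l = shape l' →
    wordDes l = wordDes l') ?_ ?_ hl l' hl' h
  · intro l' _ h
    have := numNodes_shape l'
    rw [← h, shape_nil] at this
    rw [List.eq_nil_of_length_eq_zero this.symm]
  intro u M v hu hv ihu ihv l' hl' h
  have hne : l' ≠ [] := by rintro rfl; simp [shape_append_cons hu hv] at h
  obtain ⟨u', M', v', rfl, hu', hv'⟩ := exists_eq_append_cons_max hl' hne
  rw [shape_append_cons hu hv, shape_append_cons hu' hv', node.injEq] at h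
  obtain ⟨-, hsu, hsv⟩ := h
  have hnd := List.nodup_append.1 hl'
  have hlen_u : u.length = u'.length := by rw [← numNodes_shape, hsu, numNodes_shape]
  have hlen_v : v.length = v'.length := by rw [← numNodes_shape, hsv, numNodes_shape]
  ext i
  rw [mem_wordDes_append_cons hu hv, mem_wordDes_append_cons hu' hv',
    ihu u' hnd.1 hsu, ihv v' (List.nodup_cons.1 hnd.2.1).2 hsv, hlen_u, ← List.length_pos_iff,
    ← List.length_pos_iff, hlen_v]

def Contains132 (l : List ℕ) : Prop :=
  ∃ a b c, [a, b, c] <+ l ∧ a < c ∧ c < b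

def Contains231 (l : List ℕ) : Prop :=
  ∃ a b c, [a, b, c] <+ l ∧ c < a ∧ a < b

theorem Contains132.mono {l l' : List ℕ} (h : Contains132 l) (hl : l <+ l') : Contains132 l' :=
  let ⟨a, b, c, hs, hac, hcb⟩ := h
  ⟨a, b, c, hs.trans hl, hac, hcb⟩

theorem contains231_iff_contains132_reverse {l : List ℕ} :
    Contains231 l ↔ Contains132 l.reverse := by
  simp only [Contains231, Contains132, List.sublist_reverse_iff, List.reverse_cons,
    List.reverse_nil, List.nil_append, List.cons_append]
  constructor
  · rintro ⟨a, b, c, h, h₁, h₂⟩; exact ⟨c, b, a, h, h₁, h₂⟩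
  · rintro ⟨a, b, c, h, h₁, h₂⟩; exact ⟨c, b, a, h, h₁, h₂⟩

theorem not_contains132_append_cons {u v : List ℕ} {M : ℕ} (hu : ¬ Contains132 u)
    (hv : ¬ Contains132 v) (huM : ∀ x ∈ u, x < M) (hvM : ∀ y ∈ v, y < M)
    (huv : ∀ x ∈ u, ∀ y ∈ v, y < x) : ¬ Contains132 (u ++ M :: v) := by
  rintro ⟨a, b, c, hs, hac, hcb⟩
  obtain ⟨l₁, l₂, h, h₁, h₂⟩ := List.sublist_append_iff.1 hs
  -- `[a, b, c]` splits between `u` and `M :: v` in four ways, each excluded by a hypothesis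
  rcases l₁ with _ | ⟨x, _ | ⟨y, _ | ⟨z, _ | ⟨w, l⟩⟩⟩⟩ <;>
    simp only [List.nil_append, List.cons_append, List.cons.injEq, List.nil_eq,
      reduceCtorEq, and_false] at h <;>
    simp only [← h, List.sublist_cons_iff, List.cons.injEq, List.singleton_sublist,
      List.nil_sublist] at h₁ h₂ <;>
    grind [Contains132, List.Sublist.subset]

theorem lt_of_not_contains132 {u v : List ℕ} {M : ℕ} (hl : (u ++ M :: v).Nodup)
    (h : ¬ Contains132 (u ++ M :: v)) (hv : ∀ y ∈ v, y < M) :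
    ∀ x ∈ u, ∀ y ∈ v, y < x := by
  intro x hx y hy
  refine lt_of_le_of_ne (not_lt.1 fun hxy => h ⟨x, M, y, ?_, hxy, hv y hy⟩) ?_
  · exact (List.singleton_sublist.2 hx).append ((List.singleton_sublist.2 hy).cons_cons M)
  · rintro rfl
    exact (List.nodup_append.1 hl).2.2 y hx y (List.mem_cons_of_mem M hy) rfl

theorem perm_range'_of_append {u v : List ℕ} {c : ℕ}
    (h : u ++ v ~ List.range' c (u ++ v).length) (huv : ∀ x ∈ u, ∀ y ∈ v, x < y) :
    u ~ List.range' c u.length ∧ v ~ List.range' (c + u.length) v.length := by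
  rw [List.length_append] at h
  have hu := List.mergeSort_perm u (fun a b => decide (a ≤ b))
  have hv := List.mergeSort_perm v (fun a b => decide (a ≤ b))
  have hsorted : (u.mergeSort ++ v.mergeSort).Pairwise (· ≤ ·) :=
    List.pairwise_append.2 ⟨List.pairwise_mergeSort' _ u, List.pairwise_mergeSort' _ v,
      fun x hx y hy => (huv x (hu.subset hx) y (hv.subset hy)).le⟩
  have heq := ((hu.append hv).trans h).eq_of_pairwise' hsorted (List.pairwise_le_range' 1)
  rw [← List.range'_append_1] at heq
  obtain ⟨h₁, h₂⟩ := List.append_inj heq (by simp)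
  exact ⟨h₁ ▸ hu.symm, h₂ ▸ hv.symm⟩

/-- The 132-avoiding arrangement of `c, …, c + t.numNodes - 1` whose shape is `t`. -/
def word132 : ℕ → BinaryTree Unit → List ℕ
  | _, nil => []
  | c, node _ a b => word132 (c + b.numNodes) a ++ (c + b.numNodes + a.numNodes) :: word132 c b

theorem word132_perm (c : ℕ) (t : BinaryTree Unit) : word132 c t ~ List.range' c t.numNodes := by
  induction t generalizing c with
  | nil => simp [word132]
  | node _ a b iha ihb =>
    have e : List.range' c (a.numNodes + b.numNodes + 1) =
        (List.range' c b.numNodes ++ List.range' (c + b.numNodes) a.numNodes) ++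
          [c + b.numNodes + a.numNodes] := by
      rw [List.range'_append_1, Nat.add_assoc c, ← List.range'_1_concat]; congr 1; omega
    rw [word132, numNodes, e]
    exact List.perm_middle.trans <| (List.perm_append_comm.cons _).trans <|
      (List.perm_append_singleton _ _).symm.trans (((ihb c).append (iha _)).append_right _)

theorem mem_word132 {c x : ℕ} {t : BinaryTree Unit} :
    x ∈ word132 c t ↔ c ≤ x ∧ x < c + t.numNodes := by
  rw [(word132_perm c t).mem_iff, List.mem_range'_1]

theorem not_contains132_word132 (c : ℕ) (t : BinaryTree Unit) : ¬ Contains132 (word132 c t) := by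
  induction t generalizing c with
  | nil => simp [word132, Contains132]
  | node _ a b iha ihb =>
    refine not_contains132_append_cons (iha _) (ihb _) ?_ ?_ ?_ <;>
      simp only [mem_word132] <;> omega

theorem shape_word132 (c : ℕ) (t : BinaryTree Unit) : shape (word132 c t) = t := by
  induction t generalizing c with
  | nil => simp [word132]
  | node _ a b iha ihb =>
    rw [word132, shape_append_cons, iha, ihb] <;> simp only [mem_word132] <;> omega

theorem word132_shape {l : List ℕ} {c : ℕ} (hl : l ~ List.range' c l.length)
    (h : ¬ Contains132 l) : word132 c (shape l) = l := by
  refine nodup_induction_on_max (P := fun l => ∀ c, l ~ List.range' c l.length →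
    ¬ Contains132 l → word132 c (shape l) = l) ?_ ?_ (hl.nodup_iff.2 List.nodup_range') c hl h
  · simp [word132]
  intro u M v hu hv ihu ihv c hl h
  have huv := lt_of_not_contains132 (hl.nodup_iff.2 List.nodup_range') h hv
  have hperm : (v ++ u) ++ [M] ~ List.range' c ((v ++ u) ++ [M]).length := by
    have e : ((v ++ u) ++ [M]).length = (u ++ M :: v).length := by simp; omega
    rw [e]
    exact (List.perm_append_singleton _ _).trans
      ((List.perm_append_comm.cons M).trans (List.perm_middle.symm.trans hl))
  obtain ⟨hvu, hM⟩ := perm_range'_of_append hperm (by grind)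
  obtain ⟨hv', hu'⟩ := perm_range'_of_append hvu fun y hy x hx => huv x hx y hy
  have hMeq : M = c + v.length + u.length := by simpa [Nat.add_assoc] using hM
  rw [shape_append_cons hu hv, word132, numNodes_shape, numNodes_shape,
    ihu _ hu' fun h' => h (h'.mono (List.sublist_append_left _ _)),
    ihv _ hv' fun h' => h (h'.mono ((List.sublist_cons_self M v).trans
      (List.sublist_append_right _ _))), hMeq]

def toWord {n : ℕ} (σ : Equiv.Perm (Fin n)) : List ℕ :=
  (List.finRange n).map fun i => (σ i : ℕ)

@[simp]
theorem toWord_length {n : ℕ} (σ : Equiv.Perm (Fin n)) : (toWord σ).length = n := by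
  simp [toWord]

theorem toWord_perm {n : ℕ} (σ : Equiv.Perm (Fin n)) : toWord σ ~ List.range n := by
  have := σ.map_finRange_perm.map Fin.val
  rwa [List.map_map, List.map_coe_finRange_eq_range] at this

theorem toWord_nodup {n : ℕ} (σ : Equiv.Perm (Fin n)) : (toWord σ).Nodup :=
  (toWord_perm σ).nodup_iff.2 List.nodup_range

theorem getD_toWord {n : ℕ} (σ : Equiv.Perm (Fin n)) (i : Fin n) :
    (toWord σ).getD i 0 = σ i := by
  simp [toWord]

theorem toWord_injective {n : ℕ} : Function.Injective (toWord (n := n)) := fun σ τ h =>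
  Equiv.ext fun i => Fin.ext <| by rw [← getD_toWord, h, getD_toWord]

theorem exists_toWord_eq {n : ℕ} {l : List ℕ} (hl : l ~ List.range n) :
    ∃ σ : Equiv.Perm (Fin n), toWord σ = l := by
  have hlen : l.length = n := by simpa using hl.length_eq
  have hlt : ∀ i : Fin n, l[i]'(hlen ▸ i.2) < n := fun i =>
    List.mem_range.1 (hl.subset (List.getElem_mem _))
  have hinj : Function.Injective fun i : Fin n => (⟨l[i]'(hlen ▸ i.2), hlt i⟩ : Fin n) :=
    fun i j h => Fin.ext ((hl.nodup_iff.2 List.nodup_range).getElem_inj_iff.1 (Fin.mk.inj h))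
  refine ⟨Equiv.ofBijective _ hinj.bijective_of_finite,
    List.ext_getElem (by simp [hlen]) fun i _ _ => ?_⟩
  simp [toWord]

theorem desSet_eq_wordDes {n : ℕ} (σ : Equiv.Perm (Fin n)) : desSet σ = wordDes (toWord σ) := by
  ext i
  simp only [desSet, wordDes, Finset.mem_filter, Finset.mem_Ico, toWord_length]
  refine and_congr_right fun hi => ?_
  rw [forall_prop_of_true hi.2, Fin.lt_def, ← getD_toWord, ← getD_toWord]

theorem sublist_map_finRange_iff {n : ℕ} {g : Fin n → ℕ} {a b c : ℕ} :
    [a, b, c] <+ (List.finRange n).map g ↔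
      ∃ i j k : Fin n, i < j ∧ j < k ∧ g i = a ∧ g j = b ∧ g k = c := by
  rw [List.sublist_map_iff]
  constructor
  · rintro ⟨l, hl, hmap⟩
    have hsorted := (List.pairwise_lt_finRange n).sublist hl
    rcases l with _ | ⟨i, _ | ⟨j, _ | ⟨k, _ | _⟩⟩⟩ <;> simp at hmap
    simp only [List.pairwise_cons, List.mem_cons, List.not_mem_nil] at hsorted
    grind
  · rintro ⟨i, j, k, hij, hjk, rfl, rfl, rfl⟩
    have hsorted : [i, j, k].Pairwise (· < ·) := by simp [hij, hjk, hij.trans hjk]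
    exact ⟨[i, j, k], List.sublist_of_subperm_of_pairwise
      (List.subperm_of_subset hsorted.nodup (by simp)) hsorted (List.pairwise_lt_finRange n), rfl⟩

theorem permContains_fin3_iff {n : ℕ} {σ : Equiv.Perm (Fin n)} {π : Equiv.Perm (Fin 3)} :
    permContains σ π ↔ ∃ i j k : Fin n, i < j ∧ j < k ∧
      ∀ x y : Fin 3, π x < π y ↔ σ (![i, j, k] x) < σ (![i, j, k] y) := by
  constructor
  · rintro ⟨f, hf, h⟩
    have : f = ![f 0, f 1, f 2] := by ext x; fin_cases x <;> rfl
    exact ⟨f 0, f 1, f 2, hf (by decide), hf (by decide), this ▸ h⟩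
  · rintro ⟨i, j, k, hij, hjk, h⟩
    refine ⟨_, ?_, h⟩
    simp [Fin.strictMono_iff_lt_succ, Fin.forall_fin_succ, hij, hjk]

theorem permContains_iff_exists_sublist {n : ℕ} {σ : Equiv.Perm (Fin n)} {π : Equiv.Perm (Fin 3)}
    {R : ℕ → ℕ → ℕ → Prop}
    (hπ : ∀ f : Fin 3 → ℕ, (∀ x y, π x < π y ↔ f x < f y) ↔ R (f 0) (f 1) (f 2)) :
    permContains σ π ↔ ∃ a b c, [a, b, c] <+ toWord σ ∧ R a b c := by
  simp only [permContains_fin3_iff, toWord, sublist_map_finRange_iff]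
  constructor
  · rintro ⟨i, j, k, hij, hjk, h⟩
    exact ⟨_, _, _, ⟨i, j, k, hij, hjk, rfl, rfl, rfl⟩, (hπ fun x => σ (![i, j, k] x)).1 h⟩
  · rintro ⟨_, _, _, ⟨i, j, k, hij, hjk, rfl, rfl, rfl⟩, h⟩
    exact ⟨i, j, k, hij, hjk, (hπ fun x => σ (![i, j, k] x)).2 h⟩

theorem p132_pattern_iff {α : Type*} [LinearOrder α] (f : Fin 3 → α) :
    (∀ x y, p132 x < p132 y ↔ f x < f y) ↔ f 0 < f 2 ∧ f 2 < f 1 := by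
  refine ⟨fun h => ⟨(h 0 2).1 (by decide), (h 2 1).1 (by decide)⟩, fun ⟨h₁, h₂⟩ x y => ?_⟩
  have hπ : p132 0 = 0 ∧ p132 1 = 2 ∧ p132 2 = 1 := by decide
  fin_cases x <;> fin_cases y <;> simp [hπ] <;> order

theorem p231_pattern_iff {α : Type*} [LinearOrder α] (f : Fin 3 → α) :
    (∀ x y, p231 x < p231 y ↔ f x < f y) ↔ f 2 < f 0 ∧ f 0 < f 1 := by
  refine ⟨fun h => ⟨(h 2 0).1 (by decide), (h 0 1).1 (by decide)⟩, fun ⟨h₁, h₂⟩ x y => ?_⟩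
  have hπ : p231 0 = 1 ∧ p231 1 = 2 ∧ p231 2 = 0 := by decide
  fin_cases x <;> fin_cases y <;> simp [hπ] <;> order

theorem permAvoids_p132_iff {n : ℕ} (σ : Equiv.Perm (Fin n)) :
    permAvoids σ p132 ↔ ¬ Contains132 (toWord σ) :=
  not_congr (permContains_iff_exists_sublist p132_pattern_iff)

theorem permAvoids_p231_iff {n : ℕ} (σ : Equiv.Perm (Fin n)) :
    permAvoids σ p231 ↔ ¬ Contains231 (toWord σ) :=
  not_congr (permContains_iff_exists_sublist p231_pattern_iff)

/-- `ρ t` is the unique permutation word with property `P` and shape `t`. -/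
structure IsShapeSection (P : List ℕ → Prop) (ρ : BinaryTree Unit → List ℕ) : Prop where
  perm : ∀ t, ρ t ~ List.range t.numNodes
  prop : ∀ t, P (ρ t)
  shape_eq : ∀ t, shape (ρ t) = t
  eq_of_shape_eq : ∀ l, l ~ List.range l.length → P l → ρ (shape l) = l

namespace IsShapeSection

variable {P : List ℕ → Prop} {ρ : BinaryTree Unit → List ℕ}

theorem bijective_shape (h : IsShapeSection P ρ) (n : ℕ) :
    Function.Bijective fun σ : {σ : Equiv.Perm (Fin n) // P (toWord σ)} =>
      (⟨shape (toWord σ.1), by rw [numNodes_shape, toWord_length]⟩ :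
        {t : BinaryTree Unit // t.numNodes = n}) := by
  constructor
  · rintro ⟨σ, hσ⟩ ⟨τ, hτ⟩ hst
    have hst : shape (toWord σ) = shape (toWord τ) := congrArg Subtype.val hst
    refine Subtype.ext (toWord_injective ?_)
    rw [← h.eq_of_shape_eq _ (by simpa using toWord_perm σ) hσ,
      ← h.eq_of_shape_eq _ (by simpa using toWord_perm τ) hτ, hst]
  · rintro ⟨t, rfl⟩
    obtain ⟨σ, hσ⟩ := exists_toWord_eq (h.perm t)
    exact ⟨⟨σ, hσ ▸ h.prop t⟩, Subtype.ext (by simp only [hσ, h.shape_eq])⟩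

noncomputable def shapeEquiv (h : IsShapeSection P ρ) (n : ℕ) :
    {σ : Equiv.Perm (Fin n) // P (toWord σ)} ≃ {t : BinaryTree Unit // t.numNodes = n} :=
  Equiv.ofBijective _ (h.bijective_shape n)

end IsShapeSection

theorem isShapeSection_word132 : IsShapeSection (¬ Contains132 ·) (word132 0) where
  perm t := List.range_eq_range' ▸ word132_perm 0 t
  prop := not_contains132_word132 0
  shape_eq := shape_word132 0
  eq_of_shape_eq _ hl := word132_shape (List.range_eq_range' ▸ hl)

theorem isShapeSection_word231 :
    IsShapeSection (¬ Contains231 ·) fun t => (word132 0 t.mirror).reverse where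
  perm t := by
    simpa [List.range_eq_range'] using (List.reverse_perm _).trans (word132_perm 0 t.mirror)
  prop t := by
    rw [contains231_iff_contains132_reverse, List.reverse_reverse]
    exact not_contains132_word132 0 _
  shape_eq t := by
    rw [shape_reverse ((word132_perm 0 _).nodup_iff.2 List.nodup_range'), shape_word132,
      mirror_mirror]
  eq_of_shape_eq l hl h := by
    rw [← shape_reverse (hl.nodup_iff.2 List.nodup_range), word132_shape, List.reverse_reverse]
    · simpa [List.range_eq_range'] using (List.reverse_perm l).trans hl
    · rwa [← contains231_iff_contains132_reverse]

end DescentBijection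

open DescentBijection in
/-- There is a descent-set-preserving bijection from Av_n(132) to Av_n(231). -/
theorem des_preserving_bijection (n : ℕ) :
    ∃ f : {σ : Equiv.Perm (Fin n) // permAvoids σ p132} ≃
          {σ : Equiv.Perm (Fin n) // permAvoids σ p231},
      ∀ σ, desSet ((f σ) : Equiv.Perm (Fin n)) = desSet (σ : Equiv.Perm (Fin n)) := by
  let e₁ := (Equiv.subtypeEquivRight permAvoids_p132_iff).trans
    (isShapeSection_word132.shapeEquiv n)
  let e₂ := (Equiv.subtypeEquivRight permAvoids_p231_iff).trans
    (isShapeSection_word231.shapeEquiv n)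
  refine ⟨e₁.trans e₂.symm, fun σ => ?_⟩
  have hshape : shape (toWord (e₂.symm (e₁ σ)).1) = shape (toWord σ.1) :=
    congrArg Subtype.val (e₂.apply_symm_apply (e₁ σ))
  rw [desSet_eq_wordDes, desSet_eq_wordDes]
  exact wordDes_eq_of_shape_eq (toWord_nodup _) (toWord_nodup _) hshape
end

section
/- Let I_n(312;q) = Σ_{σ ∈ Av_n(312)} q^{inv σ}. Then I_0(312;q) = 1 and for n ≥ 1, I_n(312;q) = Σ_{k=0}^{n-1} q^k · I_k(312;q) · I_{n-k-1}(312;q). -/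
open scoped Classical

/-- The inversion polynomial of 312-avoiding permutations, evaluated at q. -/
noncomputable def I312 (n : ℕ) (q : ℚ) : ℚ :=
  ∑ σ ∈ Finset.univ.filter (fun σ : Equiv.Perm (Fin n) => permAvoids σ p312), q ^ invNum σ

/-! ### Auxiliary development -/

/-- A concrete occurrence of the pattern 312. -/
def pattern312 {n : ℕ} (σ : Equiv.Perm (Fin n)) : Prop :=
  ∃ a b c : Fin n, a < b ∧ b < c ∧ σ b < σ c ∧ σ c < σ a

lemma contains_iff312 {n : ℕ} (σ : Equiv.Perm (Fin n)) :
    permContains σ p312 ↔ pattern312 σ := by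
  constructor
  · rintro ⟨f, hf, hiff⟩
    exact ⟨f 0, f 1, f 2, hf (by decide), hf (by decide),
      (hiff 1 2).mp (by decide), (hiff 2 0).mp (by decide)⟩
  · rintro ⟨a, b, c, hab, hbc, h1, h2⟩
    refine ⟨![a, b, c], ?_, ?_⟩
    · intro i j hij
      fin_cases i <;> fin_cases j <;>
        simp only [Fin.isValue, Matrix.cons_val_zero, Matrix.cons_val_one, Matrix.head_cons,
          Matrix.cons_val_two, Matrix.tail_cons] <;>
        first
          | exact absurd hij (by decide)
          | exact hab | exact hbc | exact hab.trans hbc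
    · intro i j
      fin_cases i <;> fin_cases j <;>
        simp only [Fin.isValue, Matrix.cons_val_zero, Matrix.cons_val_one, Matrix.head_cons,
          Matrix.cons_val_two, Matrix.tail_cons]
      · exact iff_of_false (by decide) (lt_irrefl _)
      · exact iff_of_false (by decide) (h1.trans h2).asymm
      · exact iff_of_false (by decide) h2.asymm
      · exact iff_of_true (by decide) (h1.trans h2)
      · exact iff_of_false (by decide) (lt_irrefl _)
      · exact iff_of_true (by decide) h1
      · exact iff_of_true (by decide) h2
      · exact iff_of_false (by decide) h1.asymm
      · exact iff_of_false (by decide) (lt_irrefl _)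

lemma avoids_iff312 {n : ℕ} (σ : Equiv.Perm (Fin n)) :
    permAvoids σ p312 ↔ ¬ pattern312 σ := not_congr (contains_iff312 σ)

section Comb

variable {k m : ℕ}

def combFun (α : Equiv.Perm (Fin k)) (β : Equiv.Perm (Fin m)) (i : Fin (k + 1 + m)) :
    Fin (k + 1 + m) :=
  if h : (i : ℕ) < k then ⟨(α ⟨i, h⟩ : ℕ) + 1, by have := (α ⟨i, h⟩).isLt; omega⟩
  else if h2 : (i : ℕ) = k then ⟨0, by omega⟩
  else ⟨(β ⟨(i : ℕ) - (k + 1), by have := i.isLt; omega⟩ : ℕ) + (k + 1),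
    by have := (β ⟨(i : ℕ) - (k + 1), by have := i.isLt; omega⟩).isLt; omega⟩

lemma combFun_inj (α : Equiv.Perm (Fin k)) (β : Equiv.Perm (Fin m)) :
    Function.Injective (combFun α β) := by
  intro i j hij
  unfold combFun at hij
  have hi := i.isLt
  have hj := j.isLt
  split_ifs at hij with h1 h2 h2 h3 h3 h4 h4 <;>
    rw [Fin.mk.injEq] at hij
  · have : (⟨i, h1⟩ : Fin k) = ⟨j, h2⟩ := α.injective (Fin.ext (by omega))
    rw [Fin.mk.injEq] at this; exact Fin.ext this
  · have := (α ⟨i, h1⟩).isLt; omega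
  · have := (β ⟨(j : ℕ) - (k+1), by omega⟩).isLt
    have := (α ⟨i, h1⟩).isLt; omega
  · have := (α ⟨j, h3⟩).isLt; omega
  · exact Fin.ext (by omega)
  · have := (β ⟨(j : ℕ) - (k+1), by omega⟩).isLt; omega
  · have := (α ⟨j, h4⟩).isLt
    have := (β ⟨(i : ℕ) - (k+1), by omega⟩).isLt; omega
  · have := (β ⟨(i : ℕ) - (k+1), by omega⟩).isLt; omega
  · have : (⟨(i:ℕ) - (k+1), by omega⟩ : Fin m) = ⟨(j:ℕ) - (k+1), by omega⟩ :=
      β.injective (Fin.ext (by omega))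
    rw [Fin.mk.injEq] at this; exact Fin.ext (by omega)

noncomputable def comb (α : Equiv.Perm (Fin k)) (β : Equiv.Perm (Fin m)) :
    Equiv.Perm (Fin (k + 1 + m)) :=
  Equiv.ofBijective (combFun α β) (Finite.injective_iff_bijective.mp (combFun_inj α β))

lemma comb_apply_lt (α : Equiv.Perm (Fin k)) (β : Equiv.Perm (Fin m)) (i : Fin (k + 1 + m))
    (h : (i : ℕ) < k) : (comb α β i : ℕ) = (α ⟨i, h⟩ : ℕ) + 1 := by
  simp only [comb, Equiv.ofBijective_apply, combFun, dif_pos h]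

lemma comb_apply_eq (α : Equiv.Perm (Fin k)) (β : Equiv.Perm (Fin m)) (i : Fin (k + 1 + m))
    (h : (i : ℕ) = k) : (comb α β i : ℕ) = 0 := by
  simp only [comb, Equiv.ofBijective_apply, combFun]
  rw [dif_neg (by omega), dif_pos h]

lemma comb_apply_gt (α : Equiv.Perm (Fin k)) (β : Equiv.Perm (Fin m)) (i : Fin (k + 1 + m))
    (h : k < (i : ℕ)) :
    (comb α β i : ℕ) = (β ⟨(i : ℕ) - (k + 1), by have := i.isLt; omega⟩ : ℕ) + (k + 1) := by
  simp only [comb, Equiv.ofBijective_apply, combFun]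
  rw [dif_neg (by omega), dif_neg (by omega)]

lemma comb_apply_shift (α : Equiv.Perm (Fin k)) (β : Equiv.Perm (Fin m)) (a : Fin m) :
    (comb α β ⟨(a : ℕ) + (k + 1), by have := a.isLt; omega⟩ : ℕ) = (β a : ℕ) + (k + 1) := by
  have h := comb_apply_gt α β ⟨(a : ℕ) + (k + 1), by have := a.isLt; omega⟩
    (show k < (a : ℕ) + (k + 1) by omega)
  rw [h]
  congr 2
  exact congrArg β (Fin.ext (show ((a : ℕ) + (k + 1)) - (k + 1) = (a : ℕ) by omega))

lemma comb_apply_cast (α : Equiv.Perm (Fin k)) (β : Equiv.Perm (Fin m)) (a : Fin k) :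
    (comb α β ⟨(a : ℕ), by have := a.isLt; omega⟩ : ℕ) = (α a : ℕ) + 1 := by
  have h := comb_apply_lt α β ⟨(a : ℕ), by have := a.isLt; omega⟩ a.isLt
  rw [h]

lemma comb_avoids (α : Equiv.Perm (Fin k)) (β : Equiv.Perm (Fin m))
    (hα : ¬ pattern312 α) (hβ : ¬ pattern312 β) : ¬ pattern312 (comb α β) := by
  rintro ⟨a, b, c, hab, hbc, h1, h2⟩
  rw [Fin.lt_def] at hab hbc h1 h2
  have ha := a.isLt; have hb := b.isLt; have hc := c.isLt
  rcases lt_trichotomy (a : ℕ) k with hak | hak | hak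
  · have hck : (c : ℕ) < k := by
      rcases lt_trichotomy (c : ℕ) k with h | h | h
      · exact h
      · exfalso; rw [comb_apply_eq α β c h] at h1
        omega
      · exfalso
        have hcv := comb_apply_gt α β c h
        have hav := comb_apply_lt α β a hak
        have := (α ⟨a, hak⟩).isLt
        omega
    have hbk : (b : ℕ) < k := by omega
    refine hα ⟨⟨a, hak⟩, ⟨b, hbk⟩, ⟨c, hck⟩, ?_, ?_, ?_, ?_⟩ <;>
      rw [Fin.lt_def]
    · exact hab
    · exact hbc
    · have := comb_apply_lt α β b hbk; have := comb_apply_lt α β c hck; omega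
    · have := comb_apply_lt α β a hak; have := comb_apply_lt α β c hck; omega
  · rw [comb_apply_eq α β a hak] at h2; omega
  · have hbk : k < (b : ℕ) := by omega
    have hck : k < (c : ℕ) := by omega
    refine hβ ⟨⟨(a:ℕ) - (k+1), by omega⟩, ⟨(b:ℕ) - (k+1), by omega⟩,
      ⟨(c:ℕ) - (k+1), by omega⟩, ?_, ?_, ?_, ?_⟩ <;> rw [Fin.lt_def]
    · show (a:ℕ) - (k+1) < (b:ℕ) - (k+1); omega
    · show (b:ℕ) - (k+1) < (c:ℕ) - (k+1); omega
    · have := comb_apply_gt α β b hbk; have := comb_apply_gt α β c hck; omega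
    · have := comb_apply_gt α β a hak; have := comb_apply_gt α β c hck; omega

lemma pattern_of_left (α : Equiv.Perm (Fin k)) (β : Equiv.Perm (Fin m))
    (hp : pattern312 α) : pattern312 (comb α β) := by
  obtain ⟨a, b, c, hab, hbc, h1, h2⟩ := hp
  rw [Fin.lt_def] at hab hbc h1 h2
  refine ⟨⟨(a : ℕ), by have := a.isLt; omega⟩, ⟨(b : ℕ), by have := b.isLt; omega⟩,
    ⟨(c : ℕ), by have := c.isLt; omega⟩, ?_, ?_, ?_, ?_⟩ <;> rw [Fin.lt_def]
  · exact hab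
  · exact hbc
  · rw [comb_apply_cast α β b, comb_apply_cast α β c]; omega
  · rw [comb_apply_cast α β a, comb_apply_cast α β c]; omega

lemma pattern_of_right (α : Equiv.Perm (Fin k)) (β : Equiv.Perm (Fin m))
    (hp : pattern312 β) : pattern312 (comb α β) := by
  obtain ⟨a, b, c, hab, hbc, h1, h2⟩ := hp
  rw [Fin.lt_def] at hab hbc h1 h2
  refine ⟨⟨(a : ℕ) + (k + 1), by have := a.isLt; omega⟩,
    ⟨(b : ℕ) + (k + 1), by have := b.isLt; omega⟩,
    ⟨(c : ℕ) + (k + 1), by have := c.isLt; omega⟩, ?_, ?_, ?_, ?_⟩ <;> rw [Fin.lt_def]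
  · show (a : ℕ) + (k + 1) < (b : ℕ) + (k + 1); omega
  · show (b : ℕ) + (k + 1) < (c : ℕ) + (k + 1); omega
  · rw [comb_apply_shift α β b, comb_apply_shift α β c]; omega
  · rw [comb_apply_shift α β a, comb_apply_shift α β c]; omega

lemma split_lemma (σ : Equiv.Perm (Fin (k + 1 + m))) (hav : ¬ pattern312 σ)
    (h0 : (σ ⟨k, by omega⟩ : ℕ) = 0) (i : Fin (k + 1 + m)) :
    ((i : ℕ) < k → 1 ≤ (σ i : ℕ) ∧ (σ i : ℕ) ≤ k) ∧ (k < (i : ℕ) → k < (σ i : ℕ)) := by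
  set pk : Fin (k + 1 + m) := ⟨k, by omega⟩ with hpk
  have nonzero : ∀ j : Fin (k + 1 + m), (j : ℕ) ≠ k → 0 < (σ j : ℕ) := by
    intro j hj
    rcases Nat.eq_zero_or_pos (σ j : ℕ) with h | h
    · exact absurd (congrArg Fin.val (σ.injective (Fin.ext (h.trans h0.symm) : σ j = σ pk))) hj
    · exact h
  have mono : ∀ p q : Fin (k + 1 + m), (p : ℕ) < k → k < (q : ℕ) → (σ p : ℕ) < (σ q : ℕ) := by
    intro p q hp hq
    by_contra hcon
    push_neg at hcon
    have hne : (σ q : ℕ) ≠ (σ p : ℕ) := fun h => by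
      have := congrArg Fin.val (σ.injective (Fin.ext h)); omega
    refine hav ⟨p, pk, q, ?_, ?_, ?_, ?_⟩ <;> rw [Fin.lt_def]
    · exact hp
    · exact hq
    · rw [h0]; exact nonzero q (by omega)
    · omega
  constructor
  · intro hik
    refine ⟨nonzero i (by omega), ?_⟩
    by_contra hcon
    push_neg at hcon
    have himg : (Finset.Ioi pk).image σ ⊆ Finset.Ioi (σ i) := by
      intro v hv
      simp only [Finset.mem_image, Finset.mem_Ioi] at hv ⊢
      obtain ⟨j, hj, rfl⟩ := hv
      rw [Fin.lt_def] at hj ⊢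
      exact mono i j hik hj
    have hcard := Finset.card_le_card himg
    rw [Finset.card_image_of_injective _ σ.injective, Fin.card_Ioi, Fin.card_Ioi] at hcard
    have := i.isLt
    have := (σ i).isLt
    rw [show (pk : ℕ) = k from rfl] at hcard
    omega
  · intro hik
    by_contra hcon
    push_neg at hcon
    have himg : (Finset.Iio pk).image σ ⊆ (Finset.Iio (σ i)).erase (σ pk) := by
      intro v hv
      simp only [Finset.mem_image, Finset.mem_Iio] at hv
      obtain ⟨j, hj, rfl⟩ := hv
      rw [Fin.lt_def] at hj
      rw [Finset.mem_erase, Finset.mem_Iio, Fin.lt_def]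
      refine ⟨fun h => ?_, mono j i hj hik⟩
      have := congrArg Fin.val (σ.injective h); omega
    have hcard := Finset.card_le_card himg
    have h0mem : σ pk ∈ Finset.Iio (σ i) := by
      rw [Finset.mem_Iio, Fin.lt_def, h0]; exact nonzero i (by omega)
    rw [Finset.card_image_of_injective _ σ.injective, Fin.card_Iio,
      Finset.card_erase_of_mem h0mem, Fin.card_Iio] at hcard
    rw [show (pk : ℕ) = k from rfl] at hcard
    have := nonzero i (by omega)
    omega

lemma invNum_comb (α : Equiv.Perm (Fin k)) (β : Equiv.Perm (Fin m)) :
    invNum (comb α β) = invNum α + invNum β + k := by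
  have hub : ∀ i : Fin (k + 1 + m), (h : (i : ℕ) < k) →
      1 ≤ (comb α β i : ℕ) ∧ (comb α β i : ℕ) ≤ k := by
    intro i h
    have := comb_apply_lt α β i h
    have := (α ⟨i, h⟩).isLt
    omega
  have hlb : ∀ i : Fin (k + 1 + m), k < (i : ℕ) → k + 1 ≤ (comb α β i : ℕ) := by
    intro i h
    have := comb_apply_gt α β i h
    omega
  set N := k + 1 + m with hN
  set S1 : Finset (Fin N × Fin N) := Finset.univ.filter
    (fun p => p.1 < p.2 ∧ comb α β p.2 < comb α β p.1 ∧ (p.2 : ℕ) < k) with hS1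
  set S2 : Finset (Fin N × Fin N) := Finset.univ.filter
    (fun p => p.1 < p.2 ∧ comb α β p.2 < comb α β p.1 ∧ k < (p.1 : ℕ)) with hS2
  set S3 : Finset (Fin N × Fin N) := Finset.univ.filter
    (fun p => (p.1 : ℕ) < k ∧ (p.2 : ℕ) = k) with hS3
  have hunion : (Finset.univ : Finset (Fin N × Fin N)).filter
      (fun p => p.1 < p.2 ∧ comb α β p.2 < comb α β p.1) = S1 ∪ S2 ∪ S3 := by
    ext ⟨x, y⟩
    simp only [hS1, hS2, hS3, Finset.mem_union, Finset.mem_filter, Finset.mem_univ, true_and]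
    constructor
    · rintro ⟨hxy, hv⟩
      rcases lt_trichotomy (y : ℕ) k with h | h | h
      · exact Or.inl (Or.inl ⟨hxy, hv, h⟩)
      · refine Or.inr ⟨?_, h⟩
        rw [Fin.lt_def] at hxy; omega
      · refine Or.inl (Or.inr ⟨hxy, hv, ?_⟩)
        rcases lt_trichotomy (x : ℕ) k with h' | h' | h'
        · exfalso
          have h1 := hub x h'
          have h2 := hlb y h
          rw [Fin.lt_def] at hv
          omega
        · exfalso
          have h1 := comb_apply_eq α β x h'
          rw [Fin.lt_def] at hv
          omega
        · exact h'
    · rintro ((⟨h1, h2, _⟩ | ⟨h1, h2, _⟩) | ⟨h1, h2⟩)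
      · exact ⟨h1, h2⟩
      · exact ⟨h1, h2⟩
      · refine ⟨Fin.lt_def.mpr (by omega), Fin.lt_def.mpr ?_⟩
        have := comb_apply_eq α β y h2
        have := hub x h1
        omega
  have hd12 : Disjoint S1 S2 := by
    rw [Finset.disjoint_left]
    rintro ⟨x, y⟩ hp hq
    simp only [hS1, hS2, Finset.mem_filter] at hp hq
    have h1 := hp.2.2.2
    have h2 := hq.2.2.2
    have := hq.2.1
    rw [Fin.lt_def] at this
    omega
  have hd3 : Disjoint (S1 ∪ S2) S3 := by
    rw [Finset.disjoint_left]
    rintro ⟨x, y⟩ hp hq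
    simp only [hS1, hS2, hS3, Finset.mem_union, Finset.mem_filter] at hp hq
    rcases hp with h | h
    · omega
    · have := h.2.1; rw [Fin.lt_def] at this; omega
  have hc1 : S1.card = invNum α := by
    rw [invNum]
    symm
    refine Finset.card_bij (fun p _ => ((⟨(p.1 : ℕ), by omega⟩ : Fin N),
      (⟨(p.2 : ℕ), by omega⟩ : Fin N))) ?_ ?_ ?_
    · rintro ⟨a, b⟩ ha
      simp only [Finset.mem_filter, Finset.mem_univ, true_and] at ha ⊢
      simp only [hS1, Finset.mem_filter, Finset.mem_univ, true_and]
      obtain ⟨h1, h2⟩ := ha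
      rw [Fin.lt_def] at h1 h2
      refine ⟨Fin.lt_def.mpr (by simpa using h1), Fin.lt_def.mpr ?_, by simpa using b.isLt⟩
      have ha' := comb_apply_lt α β ⟨(a : ℕ), by omega⟩ a.isLt
      have hb' := comb_apply_lt α β ⟨(b : ℕ), by omega⟩ b.isLt
      simp only [Fin.eta] at ha' hb'
      omega
    · rintro ⟨a, b⟩ ha ⟨c, d⟩ hc h
      simp only [Prod.mk.injEq, Fin.mk.injEq] at h
      exact Prod.ext (Fin.ext h.1) (Fin.ext h.2)
    · rintro ⟨x, y⟩ hx
      simp only [hS1, Finset.mem_filter, Finset.mem_univ, true_and] at hx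
      obtain ⟨h1, h2, h3⟩ := hx
      rw [Fin.lt_def] at h1 h2
      have hxk : (x : ℕ) < k := by omega
      refine ⟨(⟨(x : ℕ), hxk⟩, ⟨(y : ℕ), h3⟩), ?_, ?_⟩
      · simp only [Finset.mem_filter, Finset.mem_univ, true_and]
        refine ⟨Fin.lt_def.mpr (by simpa using h1), Fin.lt_def.mpr ?_⟩
        have ha' := comb_apply_lt α β x hxk
        have hb' := comb_apply_lt α β y h3
        omega
      · exact Prod.ext (Fin.ext rfl) (Fin.ext rfl)
  have hc2 : S2.card = invNum β := by
    rw [invNum]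
    symm
    refine Finset.card_bij (fun p _ => ((⟨(p.1 : ℕ) + (k + 1), by have := p.1.isLt; omega⟩ : Fin N),
      (⟨(p.2 : ℕ) + (k + 1), by have := p.2.isLt; omega⟩ : Fin N))) ?_ ?_ ?_
    · rintro ⟨a, b⟩ ha
      simp only [Finset.mem_filter, Finset.mem_univ, true_and] at ha
      simp only [hS2, Finset.mem_filter, Finset.mem_univ, true_and]
      obtain ⟨h1, h2⟩ := ha
      rw [Fin.lt_def] at h1 h2
      refine ⟨Fin.lt_def.mpr (show (a : ℕ) + (k + 1) < (b : ℕ) + (k + 1) by omega),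
        Fin.lt_def.mpr ?_, show k < (a : ℕ) + (k + 1) by omega⟩
      rw [comb_apply_shift α β a, comb_apply_shift α β b]
      omega
    · rintro ⟨a, b⟩ ha ⟨c, d⟩ hc h
      simp only [Prod.mk.injEq, Fin.mk.injEq] at h
      exact Prod.ext (Fin.ext (Nat.add_right_cancel h.1)) (Fin.ext (Nat.add_right_cancel h.2))
    · rintro ⟨x, y⟩ hx
      simp only [hS2, Finset.mem_filter, Finset.mem_univ, true_and] at hx
      obtain ⟨h1, h2, h3⟩ := hx
      rw [Fin.lt_def] at h1 h2
      have hyk : k < (y : ℕ) := by omega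
      have hxN := x.isLt
      have hyN := y.isLt
      refine ⟨(⟨(x : ℕ) - (k + 1), by omega⟩, ⟨(y : ℕ) - (k + 1), by omega⟩), ?_, ?_⟩
      · simp only [Finset.mem_filter, Finset.mem_univ, true_and]
        refine ⟨Fin.lt_def.mpr (show (x : ℕ) - (k + 1) < (y : ℕ) - (k + 1) by omega),
          Fin.lt_def.mpr ?_⟩
        have ha' := comb_apply_gt α β x h3
        have hb' := comb_apply_gt α β y hyk
        omega
      · refine Prod.ext (Fin.ext ?_) (Fin.ext ?_)
        · show (x : ℕ) - (k + 1) + (k + 1) = (x : ℕ); omega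
        · show (y : ℕ) - (k + 1) + (k + 1) = (y : ℕ); omega
  have hc3 : S3.card = k := by
    have hk : k = (Finset.univ : Finset (Fin k)).card := by simp
    rw [hk]
    symm
    refine Finset.card_bij (fun a _ => ((⟨(a : ℕ), by have := a.isLt; omega⟩ : Fin N),
      (⟨k, by omega⟩ : Fin N))) ?_ ?_ ?_
    · intro a _
      simp only [hS3, Finset.mem_filter, Finset.mem_univ, true_and]
      exact ⟨a.isLt, trivial⟩
    · intro a _ b _ h
      simp only [Prod.mk.injEq, Fin.mk.injEq] at h
      exact Fin.ext h.1
    · rintro ⟨x, y⟩ hx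
      simp only [hS3, Finset.mem_filter, Finset.mem_univ, true_and] at hx
      exact ⟨⟨(x : ℕ), hx.1⟩, Finset.mem_univ _,
        Prod.ext (Fin.ext rfl) (Fin.ext (by simp [hx.2]))⟩
  rw [invNum, hunion, Finset.card_union_of_disjoint hd3, Finset.card_union_of_disjoint hd12,
    hc1, hc2, hc3]

lemma perm_of_inj {j : ℕ} (f : Fin j → Fin j) (hf : Function.Injective f) :
    ∃ α : Equiv.Perm (Fin j), ∀ i, α i = f i :=
  ⟨Equiv.ofBijective f (Finite.injective_iff_bijective.mp hf), fun _ => rfl⟩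

lemma exists_decomp (σ : Equiv.Perm (Fin (k + 1 + m))) (hav : ¬ pattern312 σ)
    (h0 : (σ ⟨k, by omega⟩ : ℕ) = 0) :
    ∃ (α : Equiv.Perm (Fin k)) (β : Equiv.Perm (Fin m)), comb α β = σ := by
  have hA : ∀ i : Fin k, 1 ≤ (σ ⟨(i : ℕ), by have := i.isLt; omega⟩ : ℕ) ∧
      (σ ⟨(i : ℕ), by have := i.isLt; omega⟩ : ℕ) ≤ k := fun i =>
    (split_lemma σ hav h0 ⟨(i : ℕ), by have := i.isLt; omega⟩).1 i.isLt
  have hB : ∀ j : Fin m, k < (σ ⟨(j : ℕ) + (k + 1), by have := j.isLt; omega⟩ : ℕ) := fun j =>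
    (split_lemma σ hav h0 ⟨(j : ℕ) + (k + 1), by have := j.isLt; omega⟩).2
      (show k < (j : ℕ) + (k + 1) by omega)
  have hAinj : Function.Injective
      (fun i : Fin k => (⟨(σ ⟨(i : ℕ), by have := i.isLt; omega⟩ : ℕ) - 1,
        by have := hA i; omega⟩ : Fin k)) := by
    intro a b hab
    simp only [Fin.mk.injEq] at hab
    have h1 := hA a
    have h2 := hA b
    have hv : σ ⟨(a : ℕ), by have := a.isLt; omega⟩ = σ ⟨(b : ℕ), by have := b.isLt; omega⟩ :=
      Fin.ext (by omega)
    have := congrArg Fin.val (σ.injective hv)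
    exact Fin.ext this
  obtain ⟨α, hα⟩ := perm_of_inj _ hAinj
  have hBinj : Function.Injective
      (fun j : Fin m => (⟨(σ ⟨(j : ℕ) + (k + 1), by have := j.isLt; omega⟩ : ℕ) - (k + 1),
        by have h1 := hB j
           have h2 := (σ ⟨(j : ℕ) + (k + 1), by have := j.isLt; omega⟩).isLt
           omega⟩ : Fin m)) := by
    intro a b hab
    simp only [Fin.mk.injEq] at hab
    have h1 := hB a
    have h2 := hB b
    have hv : σ ⟨(a : ℕ) + (k + 1), by have := a.isLt; omega⟩
        = σ ⟨(b : ℕ) + (k + 1), by have := b.isLt; omega⟩ := Fin.ext (by omega)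
    have h3 := σ.injective hv
    rw [Fin.mk.injEq] at h3
    exact Fin.ext (by omega)
  obtain ⟨β, hβ⟩ := perm_of_inj _ hBinj
  refine ⟨α, β, Equiv.ext fun i => Fin.ext ?_⟩
  have hiN := i.isLt
  rcases lt_trichotomy (i : ℕ) k with h | h | h
  · have h1 := comb_apply_lt α β i h
    have h2 := hα ⟨(i : ℕ), h⟩
    have h3 := congrArg Fin.val h2
    have h4 := hA ⟨(i : ℕ), h⟩
    have h5 : (⟨((⟨(i : ℕ), h⟩ : Fin k) : ℕ), by omega⟩ : Fin (k + 1 + m)) = i := Fin.ext rfl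
    rw [h5] at h4
    rw [h1, h3]
    show (σ i : ℕ) - 1 + 1 = (σ i : ℕ)
    omega
  · have h1 := comb_apply_eq α β i h
    have h2 : i = ⟨k, by omega⟩ := Fin.ext h
    rw [h1, h2, h0]
  · have h1 := comb_apply_gt α β i h
    have h2 := hβ ⟨(i : ℕ) - (k + 1), by omega⟩
    have h3 := congrArg Fin.val h2
    rw [h1, h3]
    show (σ ⟨(i : ℕ) - (k + 1) + (k + 1), by omega⟩ : ℕ) - (k + 1) + (k + 1) = (σ i : ℕ)
    have h6 := hB ⟨(i : ℕ) - (k + 1), by omega⟩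
    rw [show (⟨((⟨(i : ℕ) - (k + 1), by omega⟩ : Fin m) : ℕ) + (k + 1), by omega⟩
        : Fin (k + 1 + m)) = ⟨(i : ℕ) - (k + 1) + (k + 1), by omega⟩ from Fin.ext rfl] at h6
    have h7 : (⟨(i : ℕ) - (k + 1) + (k + 1), by omega⟩ : Fin (k + 1 + m)) = i :=
      Fin.ext (by show (i : ℕ) - (k + 1) + (k + 1) = i; omega)
    rw [h7] at h6 ⊢
    omega

lemma comb_inj {α α' : Equiv.Perm (Fin k)} {β β' : Equiv.Perm (Fin m)}
    (h : comb α β = comb α' β') : α = α' ∧ β = β' := by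
  constructor
  · refine Equiv.ext fun x => Fin.ext ?_
    have h1 := comb_apply_cast α β x
    have h2 := comb_apply_cast α' β' x
    rw [h] at h1
    omega
  · refine Equiv.ext fun x => Fin.ext ?_
    have h1 := comb_apply_shift α β x
    have h2 := comb_apply_shift α' β' x
    rw [h] at h1
    omega

lemma fiber_sum (q : ℚ) (k m : ℕ) :
    ∑ σ ∈ Finset.univ.filter (fun σ : Equiv.Perm (Fin (k + 1 + m)) =>
      permAvoids σ p312 ∧ (σ ⟨k, by omega⟩ : ℕ) = 0), q ^ invNum σ
    = q ^ k * I312 k q * I312 m q := by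
  have expand : q ^ k * I312 k q * I312 m q =
      ∑ p ∈ (Finset.univ.filter fun α : Equiv.Perm (Fin k) => permAvoids α p312) ×ˢ
            (Finset.univ.filter fun β : Equiv.Perm (Fin m) => permAvoids β p312),
        q ^ (invNum p.1 + invNum p.2 + k) := by
    rw [I312, I312, Finset.sum_product, mul_assoc, Finset.sum_mul_sum, Finset.mul_sum]
    refine Finset.sum_congr rfl fun α _ => ?_
    rw [Finset.mul_sum]
    refine Finset.sum_congr rfl fun β _ => ?_
    rw [pow_add, pow_add]
    ring
  rw [expand]
  symm
  refine Finset.sum_bij (fun p _ => comb p.1 p.2) ?_ ?_ ?_ ?_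
  · rintro ⟨α, β⟩ hp
    simp only [Finset.mem_product, Finset.mem_filter, Finset.mem_univ, true_and] at hp
    simp only [Finset.mem_filter, Finset.mem_univ, true_and]
    refine ⟨(avoids_iff312 _).mpr ?_, comb_apply_eq α β _ rfl⟩
    exact comb_avoids α β ((avoids_iff312 _).mp hp.1) ((avoids_iff312 _).mp hp.2)
  · rintro ⟨α, β⟩ _ ⟨α', β'⟩ _ h
    obtain ⟨h1, h2⟩ := comb_inj h
    exact Prod.ext h1 h2
  · intro σ hσ
    simp only [Finset.mem_filter, Finset.mem_univ, true_and] at hσ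
    obtain ⟨hav, h0⟩ := hσ
    have hav' : ¬ pattern312 σ := (avoids_iff312 _).mp hav
    obtain ⟨α, β, hcomb⟩ := exists_decomp σ hav' h0
    refine ⟨(α, β), ?_, hcomb⟩
    simp only [Finset.mem_product, Finset.mem_filter, Finset.mem_univ, true_and]
    constructor
    · refine (avoids_iff312 _).mpr fun hp => hav' ?_
      rw [← hcomb]
      exact pattern_of_left α β hp
    · refine (avoids_iff312 _).mpr fun hp => hav' ?_
      rw [← hcomb]
      exact pattern_of_right α β hp
  · rintro ⟨α, β⟩ _
    rw [invNum_comb]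

end Comb

/-- Carlitz-Riordan style recurrence for I_n(312;q). -/
theorem I312_recurrence (q : ℚ) :
    I312 0 q = 1 ∧
      ∀ n : ℕ, 1 ≤ n →
        I312 n q = ∑ k ∈ Finset.range n, q ^ k * I312 k q * I312 (n - k - 1) q := by
  constructor
  · have h1 : ∀ σ : Equiv.Perm (Fin 0), permAvoids σ p312 := by
      rintro σ ⟨f, -, -⟩
      exact (f 0).elim0
    have huniv : (Finset.univ : Finset (Equiv.Perm (Fin 0))) = {1} :=
      Finset.eq_singleton_iff_unique_mem.mpr
        ⟨Finset.mem_univ _, fun σ _ => Equiv.ext fun x => x.elim0⟩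
    rw [I312, Finset.filter_true_of_mem (fun σ _ => h1 σ), huniv, Finset.sum_singleton]
    have hinv : invNum (1 : Equiv.Perm (Fin 0)) = 0 := by
      rw [invNum]
      simp [Finset.univ_eq_empty]
    rw [hinv, pow_zero]
  · intro n hn
    rw [I312, ← Finset.sum_fiberwise_of_maps_to
      (g := fun σ : Equiv.Perm (Fin n) => ((σ.symm ⟨0, by omega⟩ : Fin n) : ℕ))
      (t := Finset.range n)
      (fun σ _ => Finset.mem_range.mpr (σ.symm ⟨0, by omega⟩).isLt)]
    refine Finset.sum_congr rfl fun k hk => ?_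
    rw [Finset.mem_range] at hk
    obtain ⟨m, rfl⟩ : ∃ m, n = k + 1 + m := ⟨n - k - 1, by omega⟩
    rw [show k + 1 + m - k - 1 = m from by omega]
    rw [Finset.filter_filter]
    rw [Finset.filter_congr (q := fun σ : Equiv.Perm (Fin (k + 1 + m)) =>
      permAvoids σ p312 ∧ (σ ⟨k, by omega⟩ : ℕ) = 0) ?_]
    · exact fiber_sum q k m
    · intro σ _
      simp only [and_congr_right_iff]
      intro _
      constructor
      · intro h
        have h2 : σ.symm ⟨0, by omega⟩ = ⟨k, by omega⟩ := Fin.ext h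
        have h3 := congrArg σ h2
        rw [Equiv.apply_symm_apply] at h3
        exact congrArg Fin.val h3.symm
      · intro h
        have h2 : σ ⟨k, by omega⟩ = ⟨0, by omega⟩ := Fin.ext h
        have h3 := congrArg σ.symm h2
        rw [Equiv.symm_apply_apply] at h3
        exact (congrArg Fin.val h3).symm
end

section
/- For all k ≥ 0 and all i ≥ 1, the number of permutations σ of {1,…,2^k − 1} that avoid the pattern 321 and satisfy inv σ = i is even; and exactly one such permutation has inv σ = 0. -/
open scoped Classical

/-!
A finite set carrying an involution has the same parity as its set of fixed points.
Inversion `σ ↦ σ⁻¹` preserves 321-avoidance and the inversion number, so only 321-avoiding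
involutions count. On `Fin (2m+1)` the reverse-complement `σ ↦ w₀ σ w₀` acts on these in the same
way. An involution it fixes also fixes the middle point `m`. If it avoids 321, it maps the lower half
into itself, because a point `x < m` with `σ x > m` would give the pattern `x, m, σ x`. It is
therefore the doubling of a 321-avoiding involution `τ` of `Fin m` (`τ` below the middle, its mirror
image above), and it has twice as many inversions as `τ`. Because `2^(k+1) - 1 = 2 (2^k - 1) + 1`,
induction on `k` then finishes the proof.
-/

open Finset Equiv

theorem even_card_iff_even_card_filter_apply_eq {α : Type*} [DecidableEq α] {s : Finset α}
    {f : α → α} (hf : Function.Involutive f) (hs : ∀ x ∈ s, f x ∈ s) :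
    Even #s ↔ Even #{x ∈ s | f x = x} := by
  have hmoved : Even #{x ∈ s | f x ≠ x} := by
    rw [← ZMod.natCast_eq_zero_iff_even, card_filter, Nat.cast_sum]
    refine sum_involution (fun x _ => f x) (fun x _ => ?_) (fun x _ h => ?_) hs (fun x _ => hf x)
    · simp only [hf x, ne_comm (a := x)]
      split_ifs <;> decide
    · simpa using h
  rw [← card_filter_add_card_filter_not (fun x => f x = x) (s := s), Nat.even_add]
  exact iff_true_right hmoved

namespace Equiv.Perm

variable {n : ℕ}

def inversions (σ : Perm (Fin n)) : Finset (Fin n × Fin n) :=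
  {p | p.1 < p.2 ∧ σ p.2 < σ p.1}

@[simp]
theorem mem_inversions {σ : Perm (Fin n)} {a b : Fin n} :
    (a, b) ∈ σ.inversions ↔ a < b ∧ σ b < σ a := by
  simp [inversions]

theorem invNum_eq_card_inversions (σ : Perm (Fin n)) : invNum σ = #σ.inversions := rfl

theorem invNum_eq_zero_iff {σ : Perm (Fin n)} : invNum σ = 0 ↔ σ = 1 := by
  rw [invNum_eq_card_inversions, card_eq_zero]
  refine ⟨fun h => ext fun x => StrictMono.apply_eq fun a b hab => ?_, fun h => ?_⟩
  · by_contra! hba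
    have hinv : (a, b) ∈ σ.inversions :=
      mem_inversions.2 ⟨hab, hba.lt_of_ne (σ.injective.ne hab.ne')⟩
    simp [h] at hinv
  · ext ⟨a, b⟩
    simpa [h] using le_of_lt

theorem mem_inversions_inv {σ : Perm (Fin n)} {a b : Fin n} :
    (a, b) ∈ σ⁻¹.inversions ↔ (σ⁻¹ b, σ⁻¹ a) ∈ σ.inversions := by
  simp [and_comm]

theorem invNum_inv (σ : Perm (Fin n)) : invNum σ⁻¹ = invNum σ :=
  card_equiv ((prodComm _ _).trans (prodCongr σ⁻¹ σ⁻¹)) fun _ => mem_inversions_inv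

def NoDecreasingTriple (σ : Perm (Fin n)) : Prop :=
  ¬ ∃ i j k : Fin n, (i, j) ∈ σ.inversions ∧ (j, k) ∈ σ.inversions

theorem permContains_p321_iff {σ : Perm (Fin n)} :
    permContains σ p321 ↔ ∃ i j k : Fin n, (i, j) ∈ σ.inversions ∧ (j, k) ∈ σ.inversions := by
  simp only [permContains, mem_inversions]
  constructor
  · rintro ⟨f, hf, hσ⟩
    exact ⟨f 0, f 1, f 2, ⟨hf (by decide), (hσ 1 0).1 (by decide)⟩,
      hf (by decide), (hσ 2 1).1 (by decide)⟩
  · rintro ⟨i, j, k, ⟨hij, hji⟩, hjk, hkj⟩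
    refine ⟨![i, j, k], Fin.strictMono_iff_lt_succ.2 ?_, ?_⟩
    · simp [Fin.forall_fin_two, hij, hjk]
    · have hki := hkj.trans hji
      simp [Fin.forall_fin_succ, p321, swap_apply_of_ne_of_ne, hji, hkj, hki,
        hji.le, hkj.le, hki.le]

theorem permAvoids_p321_iff {σ : Perm (Fin n)} :
    permAvoids σ p321 ↔ σ.NoDecreasingTriple :=
  not_congr permContains_p321_iff

theorem NoDecreasingTriple.inv {σ : Perm (Fin n)} (h : σ.NoDecreasingTriple) :
    σ⁻¹.NoDecreasingTriple := fun ⟨_, _, _, hij, hjk⟩ =>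
  h ⟨_, _, _, mem_inversions_inv.1 hjk, mem_inversions_inv.1 hij⟩

def revCompl : Perm (Fin n) ≃* Perm (Fin n) := MulAut.conj Fin.revPerm

theorem revCompl_apply (σ : Perm (Fin n)) (x : Fin n) : revCompl σ x = (σ x.rev).rev := by
  simp [revCompl, MulAut.conj_apply, Perm.inv_def, Fin.revPerm_symm]

theorem revCompl_revCompl (σ : Perm (Fin n)) : revCompl (revCompl σ) = σ := by
  ext x
  simp [revCompl_apply]

theorem mem_inversions_revCompl {σ : Perm (Fin n)} {a b : Fin n} :
    (a, b) ∈ (revCompl σ).inversions ↔ (b.rev, a.rev) ∈ σ.inversions := by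
  simp [revCompl_apply]

theorem invNum_revCompl (σ : Perm (Fin n)) : invNum (revCompl σ) = invNum σ :=
  card_equiv ((prodComm _ _).trans (prodCongr Fin.revPerm Fin.revPerm))
    fun _ => mem_inversions_revCompl

theorem NoDecreasingTriple.revCompl {σ : Perm (Fin n)} (h : σ.NoDecreasingTriple) :
    (revCompl σ).NoDecreasingTriple := fun ⟨_, _, _, hij, hjk⟩ =>
  h ⟨_, _, _, mem_inversions_revCompl.1 hjk, mem_inversions_revCompl.1 hij⟩

end Equiv.Perm

namespace Double

variable {m : ℕ} {y z : Fin m}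

def lo (y : Fin m) : Fin (2 * m + 1) := Fin.castLE (by omega) y

def mid : Fin (2 * m + 1) := ⟨m, by omega⟩

def hi (y : Fin m) : Fin (2 * m + 1) := (lo y).rev

@[simp] theorem val_lo (y : Fin m) : (lo y : ℕ) = y := rfl

@[simp] theorem val_mid : (mid : Fin (2 * m + 1)).val = m := rfl

@[simp] theorem val_hi (y : Fin m) : (hi y : ℕ) = 2 * m - y := by simp [hi]

theorem cases {motive : Fin (2 * m + 1) → Prop} (lo : ∀ y, motive (lo y)) (mid : motive mid)
    (hi : ∀ y, motive (hi y)) (x : Fin (2 * m + 1)) : motive x := by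
  rcases lt_trichotomy x.val m with h | h | h
  · exact lo ⟨x, h⟩
  · exact (Fin.ext h.symm : Double.mid = x) ▸ mid
  · have := hi ⟨2 * m - x, by omega⟩
    rwa [show Double.hi ⟨2 * m - x, _⟩ = x from Fin.ext (by simp; omega)] at this

theorem lo_injective : Function.Injective (lo (m := m)) := Fin.castLE_injective (by omega)

@[simp] theorem lo_inj : lo y = lo z ↔ y = z := lo_injective.eq_iff

theorem hi_injective : Function.Injective (hi (m := m)) := Fin.rev_injective.comp lo_injective

@[simp] theorem hi_inj : hi y = hi z ↔ y = z := hi_injective.eq_iff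

@[simp] theorem rev_lo (y : Fin m) : (lo y).rev = hi y := rfl

@[simp] theorem rev_hi (y : Fin m) : (hi y).rev = lo y := Fin.rev_rev _

@[simp] theorem rev_mid : (mid : Fin (2 * m + 1)).rev = mid := Fin.ext (by simp [Fin.val_rev]; omega)

theorem rev_eq_self_iff {x : Fin (2 * m + 1)} : x.rev = x ↔ x = mid := by
  simp only [Fin.ext_iff, Fin.val_rev, val_mid]
  omega

@[simp] theorem lo_lt_lo : lo y < lo z ↔ y < z := by simp only [Fin.lt_def, val_lo]
@[simp] theorem hi_lt_hi : hi y < hi z ↔ z < y := by simp only [Fin.lt_def, val_hi]; omega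
@[simp] theorem lo_lt_mid : lo y < mid := by simp only [Fin.lt_def, val_lo, val_mid]; omega
@[simp] theorem mid_lt_hi : mid < hi y := by simp only [Fin.lt_def, val_hi, val_mid]; omega
@[simp] theorem lo_lt_hi : lo y < hi z := lo_lt_mid.trans mid_lt_hi
@[simp] theorem not_mid_lt_lo : ¬ mid < lo y := lo_lt_mid.not_gt
@[simp] theorem not_hi_lt_mid : ¬ hi y < mid := mid_lt_hi.not_gt
@[simp] theorem not_hi_lt_lo : ¬ hi y < lo z := lo_lt_hi.not_gt
@[simp] theorem lo_ne_mid : lo y ≠ mid := lo_lt_mid.ne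
@[simp] theorem hi_ne_mid : hi y ≠ mid := mid_lt_hi.ne'
@[simp] theorem lo_ne_hi : lo y ≠ hi z := lo_lt_hi.ne
@[simp] theorem hi_ne_lo : hi y ≠ lo z := lo_lt_hi.ne'

end Double

namespace Equiv.Perm

open Double

variable {m : ℕ}

def extendLow (τ : Perm (Fin m)) : Perm (Fin (2 * m + 1)) :=
  τ.extendDomain (Fin.castLEquiv (by omega))

@[simp] theorem extendLow_apply_lo (τ : Perm (Fin m)) (y : Fin m) :
    extendLow τ (lo y) = lo (τ y) :=
  extendDomain_apply_image τ _ y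

theorem extendLow_apply_of_le (τ : Perm (Fin m)) {x : Fin (2 * m + 1)} (hx : m ≤ x) :
    extendLow τ x = x :=
  extendDomain_apply_not_subtype τ _ (not_lt.2 hx)

@[simp] theorem extendLow_apply_mid (τ : Perm (Fin m)) : extendLow τ mid = mid :=
  extendLow_apply_of_le τ le_rfl

@[simp] theorem extendLow_apply_hi (τ : Perm (Fin m)) (y : Fin m) : extendLow τ (hi y) = hi y :=
  extendLow_apply_of_le τ (by simp; omega)

def double (τ : Perm (Fin m)) : Perm (Fin (2 * m + 1)) := extendLow τ * revCompl (extendLow τ)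

@[simp] theorem double_apply_lo (τ : Perm (Fin m)) (y : Fin m) : double τ (lo y) = lo (τ y) := by
  simp [double, revCompl_apply]

@[simp] theorem double_apply_mid (τ : Perm (Fin m)) : double τ mid = mid := by
  simp [double, revCompl_apply]

@[simp] theorem double_apply_hi (τ : Perm (Fin m)) (y : Fin m) : double τ (hi y) = hi (τ y) := by
  simp [double, revCompl_apply]

theorem double_injective : Function.Injective (double (m := m)) := fun τ ρ h =>
  ext fun y => by simpa using congr($h (lo y))

theorem double_inv (τ : Perm (Fin m)) : double τ⁻¹ = (double τ)⁻¹ := by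
  refine eq_inv_of_mul_eq_one_left (ext (Double.cases (fun y => ?_) ?_ (fun y => ?_))) <;> simp

theorem revCompl_double (τ : Perm (Fin m)) : revCompl (double τ) = double τ := by
  refine ext (Double.cases (fun y => ?_) ?_ (fun y => ?_)) <;> simp [revCompl_apply]

theorem inversions_double (τ : Perm (Fin m)) :
    (double τ).inversions =
      τ.inversions.image (Prod.map lo lo) ∪ τ.inversions.image (fun q => (hi q.2, hi q.1)) := by
  ext ⟨a, b⟩
  induction a using Double.cases <;> induction b using Double.cases <;> simp [and_comm]

theorem invNum_double (τ : Perm (Fin m)) : invNum (double τ) = 2 * invNum τ := by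
  have hlo : Function.Injective (Prod.map lo lo : Fin m × Fin m → _) :=
    lo_injective.prodMap lo_injective
  have hhi : Function.Injective fun q : Fin m × Fin m => (hi q.2, hi q.1) := fun q r h => by
    simp_all [Prod.ext_iff]
  rw [invNum_eq_card_inversions, inversions_double, card_union_of_disjoint,
    card_image_of_injective _ hlo, card_image_of_injective _ hhi, two_mul,
    invNum_eq_card_inversions]
  simp only [disjoint_left, mem_image]
  rintro _ ⟨q, -, rfl⟩ ⟨r, -, h⟩
  simp [Prod.ext_iff] at h

theorem noDecreasingTriple_double_iff {τ : Perm (Fin m)} :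
    (double τ).NoDecreasingTriple ↔ τ.NoDecreasingTriple := by
  refine not_congr ⟨?_, fun ⟨a, b, c, hab, hbc⟩ => ⟨lo a, lo b, lo c, ?_, ?_⟩⟩
  · rintro ⟨i, j, k, hij, hjk⟩
    simp only [inversions_double, mem_union, mem_image, Prod.exists, Prod.map,
      Prod.mk.injEq] at hij hjk
    rcases hij with ⟨a, b, hab, rfl, rfl⟩ | ⟨a, b, hab, rfl, rfl⟩ <;>
      rcases hjk with ⟨c, d, hcd, h, rfl⟩ | ⟨c, d, hcd, h, rfl⟩ <;> simp at h
    · exact ⟨a, b, d, hab, h ▸ hcd⟩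
    · exact ⟨c, a, b, h ▸ hcd, hab⟩
  · exact inversions_double τ ▸ mem_union_left _ (mem_image_of_mem (Prod.map lo lo) hab)
  · exact inversions_double τ ▸ mem_union_left _ (mem_image_of_mem (Prod.map lo lo) hbc)

theorem exists_double_eq {σ : Perm (Fin (2 * m + 1))} (hinv : σ⁻¹ = σ)
    (hrc : revCompl σ = σ) (hσ : σ.NoDecreasingTriple) : ∃ τ, double τ = σ := by
  have hσσ (x) : σ (σ x) = x := by simpa using congr($hinv (σ x)).symm
  have hrev (x) : σ x.rev = (σ x).rev := by
    simpa [revCompl_apply] using congr($hrc x.rev).symm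
  have hmid : σ mid = mid := rev_eq_self_iff.1 (by rw [← hrev, rev_mid])
  have hlo (y : Fin m) : (σ (lo y) : ℕ) < m := by
    by_contra! hge
    have hne : σ (lo y) ≠ mid := fun h => lo_ne_mid (by rw [← hσσ (lo y), h, hmid])
    have hgt : mid < σ (lo y) := lt_of_le_of_ne (Fin.le_def.2 hge) hne.symm
    exact hσ ⟨lo y, mid, σ (lo y), by simp [hmid, hgt], by simp [hmid, hσσ, hgt]⟩
  let τ : Perm (Fin m) := Function.Involutive.toPerm (fun y => (σ (lo y)).castLT (hlo y))
    fun y => lo_injective (hσσ (lo y))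
  have hτ (y) : lo (τ y) = σ (lo y) := rfl
  refine ⟨τ, ext (Double.cases (fun y => ?_) ?_ (fun y => ?_))⟩
  · rw [double_apply_lo, hτ]
  · rw [double_apply_mid, hmid]
  · rw [double_apply_hi, ← rev_lo, hτ, ← hrev, rev_lo]

theorem card_revCompl_fixed (m i : ℕ) :
    #{σ : Perm (Fin (2 * m + 1)) |
        (σ⁻¹ = σ ∧ σ.NoDecreasingTriple ∧ invNum σ = i) ∧ revCompl σ = σ} =
      #{τ : Perm (Fin m) | τ⁻¹ = τ ∧ τ.NoDecreasingTriple ∧ 2 * invNum τ = i} := by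
  refine (card_nbij double (fun τ hτ => ?_) double_injective.injOn fun σ hσ => ?_).symm
  · simp only [coe_filter, mem_univ, true_and, Set.mem_ofPred_eq] at hτ ⊢
    obtain ⟨hinv, hτ, rfl⟩ := hτ
    exact ⟨⟨by rw [← double_inv, hinv], noDecreasingTriple_double_iff.2 hτ, invNum_double τ⟩,
      revCompl_double τ⟩
  · simp only [coe_filter, mem_univ, true_and, Set.mem_ofPred_eq] at hσ ⊢
    obtain ⟨⟨hinv, hσ, rfl⟩, hrc⟩ := hσ
    obtain ⟨τ, rfl⟩ := exists_double_eq hinv hrc hσ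
    exact ⟨τ, ⟨double_injective (by rw [double_inv, hinv]), noDecreasingTriple_double_iff.1 hσ,
      (invNum_double τ).symm⟩, rfl⟩

theorem even_card_involutions_two_pow_sub_one (k : ℕ) {i : ℕ} (hi : 1 ≤ i) :
    Even #{σ : Perm (Fin (2 ^ k - 1)) | σ⁻¹ = σ ∧ σ.NoDecreasingTriple ∧ invNum σ = i} := by
  induction k generalizing i with
  | zero =>
    rw [card_eq_zero.2 (filter_eq_empty_iff.2 ?_)]
    · exact Even.zero
    rintro σ - ⟨-, -, hσ⟩
    rw [invNum_eq_zero_iff.2 (Subsingleton.elim (α := Perm (Fin 0)) σ 1)] at hσ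
    omega
  | succ k ih =>
    rw [show 2 ^ (k + 1) - 1 = 2 * (2 ^ k - 1) + 1 by rw [pow_succ]; have := k.one_le_two_pow; omega]
    rw [even_card_iff_even_card_filter_apply_eq revCompl_revCompl, filter_filter,
      card_revCompl_fixed]
    · obtain ⟨j, rfl | rfl⟩ := Nat.even_or_odd' i
      · simpa only [Nat.mul_left_cancel_iff two_pos] using ih (i := j) (by omega)
      · rw [card_eq_zero.2 (filter_eq_empty_iff.2 ?_)]
        · exact Even.zero
        rintro τ - ⟨-, -, hτ⟩
        omega
    intro σ hσ
    simp only [mem_filter, mem_univ, true_and] at hσ ⊢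
    obtain ⟨hinv, hσ, rfl⟩ := hσ
    exact ⟨by rw [← map_inv, hinv], hσ.revCompl, invNum_revCompl σ⟩

end Equiv.Perm

open Equiv.Perm in
/-- Coefficients of I_{2^k-1}(321;q): the constant coefficient is 1 and all higher ones even. -/
theorem I321_parity (k i : ℕ) (hi : 1 ≤ i) :
    Even ((Finset.univ.filter
      (fun σ : Equiv.Perm (Fin (2 ^ k - 1)) => permAvoids σ p321 ∧ invNum σ = i)).card) ∧
    (Finset.univ.filter
      (fun σ : Equiv.Perm (Fin (2 ^ k - 1)) => permAvoids σ p321 ∧ invNum σ = 0)).card = 1 := by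
  simp only [permAvoids_p321_iff]
  refine ⟨?_, card_eq_one.2 ⟨1, ?_⟩⟩
  · rw [even_card_iff_even_card_filter_apply_eq inv_inv, filter_filter]
    · convert even_card_involutions_two_pow_sub_one k hi using 3
      tauto
    intro σ hσ
    simp only [mem_filter, mem_univ, true_and] at hσ ⊢
    exact ⟨hσ.1.inv, (invNum_inv σ).trans hσ.2⟩
  · ext σ
    simp only [mem_filter, mem_univ, true_and, mem_singleton, invNum_eq_zero_iff,
      and_iff_right_iff_imp]
    rintro rfl ⟨_, _, _, h, -⟩
    exact lt_asymm (mem_inversions.1 h).1 (mem_inversions.1 h).2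
end

section
/- For all n ≥ 1, Σ_{σ ∈ Av_n(132,231)} q^{inv σ} = (1+q)(1+q^2)⋯(1+q^{n-1}), where Av_n(132,231) is the set of permutations of {1,…,n} avoiding both 132 and 231. -/
open scoped Classical

/-!
In a permutation of `Fin (n + 1)` avoiding 132 and 231 the maximum stands first or last: if it
stood at an interior position `m`, the positions `0 < m < n` would carry a 132 or a 231 according
as the first entry is smaller or larger than the last one. Conversely, putting the maximum first
or last creates no occurrence of 132 or 231, since in both patterns the largest letter is interior.
Removing the maximum is therefore a two-to-one correspondence `Av_{n+1} → Av_n` (for `n ≥ 1`), and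
the maximum contributes `n` inversions in front and none at the end, whence the factor `1 + q ^ n`.
-/

open Equiv Finset

section PatternOccurrence

variable {m n k : ℕ} {τ : Perm (Fin m)} {σ : Perm (Fin n)} {π : Perm (Fin k)}

theorem permContains_of_strictMono {f : Fin k → Fin n} (hf : StrictMono f)
    (hσf : StrictMono fun i => σ (f (π.symm i))) : permContains σ π :=
  ⟨f, hf, fun i j => by simpa using (hσf.lt_iff_lt (a := π i) (b := π j)).symm⟩

theorem permAvoids_of_lt (h : n < k) : permAvoids σ π := by
  rintro ⟨f, hf, -⟩
  exact h.not_ge (by simpa using Fintype.card_le_of_injective f hf.injective)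

theorem permContains_of_semiconj {e g : Fin n → Fin m} (he : StrictMono e) (hg : StrictMono g)
    (h : ∀ i, τ (e i) = g (σ i)) (hσ : permContains σ π) : permContains τ π := by
  obtain ⟨f, hf, hfπ⟩ := hσ
  exact ⟨e ∘ f, he.comp hf, fun i j => by simp [h, hg.lt_iff_lt, hfπ]⟩

theorem permContains_of_semiconj_of_mem_range {e g : Fin n → Fin m} (he : StrictMono e)
    (hg : StrictMono g) (h : ∀ i, τ (e i) = g (σ i)) {f : Fin k → Fin m} (hf : StrictMono f)
    (hfπ : ∀ i j, π i < π j ↔ τ (f i) < τ (f j)) (hrange : ∀ i, f i ∈ Set.range e) :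
    permContains σ π := by
  choose f' hf' using hrange
  refine ⟨f', fun i j hij => he.lt_iff_lt.mp ?_, fun i j => ?_⟩
  · simpa [hf'] using hf hij
  · rw [hfπ, ← hf' i, ← hf' j, h, h, hg.lt_iff_lt]

end PatternOccurrence

section AdjoinMax

variable {n : ℕ}

def appendMax (σ : Perm (Fin n)) : Perm (Fin (n + 1)) :=
  finSuccEquivLast.symm.permCongr σ.optionCongr

def prependMax (σ : Perm (Fin n)) : Perm (Fin (n + 1)) :=
  appendMax σ * (finRotate (n + 1))⁻¹

@[simp] theorem appendMax_castSucc (σ : Perm (Fin n)) (i : Fin n) :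
    appendMax σ i.castSucc = (σ i).castSucc := by
  simp [appendMax, Equiv.permCongr_apply, finSuccEquivLast_castSucc]

@[simp] theorem appendMax_last (σ : Perm (Fin n)) : appendMax σ (Fin.last n) = Fin.last n := by
  simp [appendMax, Equiv.permCongr_apply, finSuccEquivLast_last]

@[simp] theorem prependMax_zero (σ : Perm (Fin n)) : prependMax σ 0 = Fin.last n := by
  rw [prependMax, Perm.mul_apply, (Perm.inv_eq_iff_eq).2 (finRotate_last).symm, appendMax_last]

@[simp] theorem prependMax_succ (σ : Perm (Fin n)) (i : Fin n) :
    prependMax σ i.succ = (σ i).castSucc := by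
  have : finRotate (n + 1) i.castSucc = i.succ := by
    rw [finRotate_apply, Fin.coeSucc_eq_succ]
  rw [prependMax, Perm.mul_apply, (Perm.inv_eq_iff_eq).2 this.symm, appendMax_castSucc]

theorem appendMax_injective : Function.Injective (appendMax (n := n)) :=
  finSuccEquivLast.symm.permCongr.injective.comp optionCongr_injective

theorem prependMax_injective : Function.Injective (prependMax (n := n)) :=
  (mul_left_injective _).comp appendMax_injective

theorem appendMax_ne_prependMax (hn : 1 ≤ n) (σ σ' : Perm (Fin n)) :
    appendMax σ ≠ prependMax σ' := by
  intro h
  have h0 := DFunLike.congr_fun h (Fin.castSucc ⟨0, hn⟩)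
  rw [appendMax_castSucc, show Fin.castSucc ⟨0, hn⟩ = 0 from rfl, prependMax_zero] at h0
  exact (Fin.castSucc_lt_last _).ne h0

theorem exists_appendMax_eq {τ : Perm (Fin (n + 1))} (h : τ (Fin.last n) = Fin.last n) :
    ∃ σ, appendMax σ = τ := by
  set τ' := finSuccEquivLast.symm.permCongr.symm τ
  have hτ' : τ' none = none := by simp [τ', Equiv.permCongr_apply, h, finSuccEquivLast_last]
  refine ⟨removeNone τ', ?_⟩
  rw [appendMax, map_equiv_removeNone, hτ', swap_self, ← Perm.one_def, one_mul,
    Equiv.apply_symm_apply]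

theorem exists_prependMax_eq {τ : Perm (Fin (n + 1))} (h : τ 0 = Fin.last n) :
    ∃ σ, prependMax σ = τ := by
  obtain ⟨σ, hσ⟩ := exists_appendMax_eq (τ := τ * finRotate (n + 1)) (by simp [h])
  exact ⟨σ, by simp [prependMax, hσ]⟩

end AdjoinMax

section AvoidanceOfAdjoinedMax

variable {n k : ℕ} {σ : Perm (Fin n)} {π : Perm (Fin (k + 1))}

theorem permContains_appendMax_iff (hπ : π (Fin.last k) ≠ Fin.last k) :
    permContains (appendMax σ) π ↔ permContains σ π := by
  refine ⟨fun ⟨f, hf, hfπ⟩ => ?_,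
    permContains_of_semiconj Fin.strictMono_castSucc Fin.strictMono_castSucc (appendMax_castSucc σ)⟩
  have hlast : f (Fin.last k) ≠ Fin.last n := by
    intro hf_last
    have hmax : π (Fin.last k) < π (π⁻¹ (Fin.last k)) := by
      simpa using (Fin.le_last _).lt_of_ne hπ
    have := (hfπ _ _).1 hmax
    rw [hf_last, appendMax_last] at this
    exact (Fin.le_last _).not_gt this
  refine permContains_of_semiconj_of_mem_range Fin.strictMono_castSucc Fin.strictMono_castSucc
    (appendMax_castSucc σ) hf hfπ fun i => ?_
  have : f i ≠ Fin.last n :=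
    ((hf.monotone (Fin.le_last i)).trans_lt ((Fin.le_last _).lt_of_ne hlast)).ne
  exact ⟨(f i).castPred this, Fin.castSucc_castPred _ this⟩

theorem permContains_prependMax_iff (hπ : π 0 ≠ Fin.last k) :
    permContains (prependMax σ) π ↔ permContains σ π := by
  refine ⟨fun ⟨f, hf, hfπ⟩ => ?_,
    permContains_of_semiconj Fin.strictMono_succ Fin.strictMono_castSucc (prependMax_succ σ)⟩
  have hzero : f 0 ≠ 0 := by
    intro hf_zero
    have hmax : π 0 < π (π⁻¹ (Fin.last k)) := by
      simpa using (Fin.le_last _).lt_of_ne hπ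
    have := (hfπ _ _).1 hmax
    rw [hf_zero, prependMax_zero] at this
    exact (Fin.le_last _).not_gt this
  refine permContains_of_semiconj_of_mem_range Fin.strictMono_succ Fin.strictMono_castSucc
    (prependMax_succ σ) hf hfπ fun i => ?_
  have : f i ≠ 0 :=
    (((Fin.pos_iff_ne_zero' _).2 hzero).trans_le (hf.monotone (Fin.zero_le i))).ne'
  exact ⟨(f i).pred this, Fin.succ_pred _ this⟩

end AvoidanceOfAdjoinedMax

theorem invNum_eq_sum {n : ℕ} (σ : Perm (Fin n)) :
    invNum σ = ∑ i, ∑ j, if i < j ∧ σ j < σ i then 1 else 0 := by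
  rw [invNum, card_filter, Fintype.sum_prod_type]

theorem invNum_appendMax {n : ℕ} (σ : Perm (Fin n)) : invNum (appendMax σ) = invNum σ := by
  have hlast (i : Fin (n + 1)) : ¬ Fin.last n < i := (Fin.le_last i).not_gt
  simp only [invNum_eq_sum, Fin.sum_univ_castSucc, appendMax_castSucc, appendMax_last,
    Fin.castSucc_lt_castSucc_iff, hlast]
  simp

theorem invNum_prependMax {n : ℕ} (σ : Perm (Fin n)) : invNum (prependMax σ) = n + invNum σ := by
  simp only [invNum_eq_sum, Fin.sum_univ_succ, prependMax_succ, prependMax_zero,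
    Fin.succ_lt_succ_iff, Fin.castSucc_lt_castSucc_iff, Fin.castSucc_lt_last]
  simp

theorem eq_last_or_eq_last_of_permAvoids {n : ℕ} {τ : Perm (Fin (n + 1))}
    (h132 : permAvoids τ p132) (h231 : permAvoids τ p231) :
    τ 0 = Fin.last n ∨ τ (Fin.last n) = Fin.last n := by
  by_contra! ⟨h0, hlast⟩
  obtain ⟨m, hm⟩ := τ.surjective (Fin.last n)
  have h0m : 0 < m := (Fin.pos_iff_ne_zero' m).2 (by rintro rfl; exact h0 hm)
  have hml : m < Fin.last n := (Fin.le_last m).lt_of_ne (by rintro rfl; exact hlast hm)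
  have hτ0 : τ 0 < Fin.last n := (Fin.le_last _).lt_of_ne h0
  have hτlast : τ (Fin.last n) < Fin.last n := (Fin.le_last _).lt_of_ne hlast
  have hpos : StrictMono ![0, m, Fin.last n] := by simp [h0m, hml]
  rcases (τ.injective.ne (h0m.trans hml).ne).lt_or_gt with hlt | hgt
  · refine h132 (permContains_of_strictMono hpos ?_)
    have : (fun i => τ (![0, m, Fin.last n] (p132.symm i))) = ![τ 0, τ (Fin.last n), τ m] := by
      funext i; fin_cases i <;> rfl
    simp [this, hm, hlt, hτlast]
  · refine h231 (permContains_of_strictMono hpos ?_)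
    have : (fun i => τ (![0, m, Fin.last n] (p231.symm i))) = ![τ (Fin.last n), τ 0, τ m] := by
      funext i; fin_cases i <;> rfl
    simp [this, hm, hgt, hτ0]

noncomputable def avoiders132231 (n : ℕ) : Finset (Perm (Fin n)) :=
  univ.filter fun σ => permAvoids σ p132 ∧ permAvoids σ p231

@[simp] theorem mem_avoiders132231 {n : ℕ} {σ : Perm (Fin n)} :
    σ ∈ avoiders132231 n ↔ permAvoids σ p132 ∧ permAvoids σ p231 := by
  simp [avoiders132231]

theorem appendMax_mem_avoiders132231_iff {n : ℕ} {σ : Perm (Fin n)} :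
    appendMax σ ∈ avoiders132231 (n + 1) ↔ σ ∈ avoiders132231 n := by
  simp only [mem_avoiders132231, permAvoids,
    permContains_appendMax_iff (show p132 2 ≠ 2 by decide),
    permContains_appendMax_iff (show p231 2 ≠ 2 by decide)]

theorem prependMax_mem_avoiders132231_iff {n : ℕ} {σ : Perm (Fin n)} :
    prependMax σ ∈ avoiders132231 (n + 1) ↔ σ ∈ avoiders132231 n := by
  simp only [mem_avoiders132231, permAvoids,
    permContains_prependMax_iff (show p132 0 ≠ 2 by decide),
    permContains_prependMax_iff (show p231 0 ≠ 2 by decide)]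

theorem avoiders132231_succ {n : ℕ} :
    avoiders132231 (n + 1) =
      (avoiders132231 n).image appendMax ∪ (avoiders132231 n).image prependMax := by
  ext τ
  simp only [mem_union, mem_image]
  constructor
  · intro hτ
    obtain ⟨h132, h231⟩ := mem_avoiders132231.1 hτ
    rcases eq_last_or_eq_last_of_permAvoids h132 h231 with h | h
    · obtain ⟨σ, rfl⟩ := exists_prependMax_eq h
      exact .inr ⟨σ, prependMax_mem_avoiders132231_iff.1 hτ, rfl⟩
    · obtain ⟨σ, rfl⟩ := exists_appendMax_eq h
      exact .inl ⟨σ, appendMax_mem_avoiders132231_iff.1 hτ, rfl⟩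
  · rintro (⟨σ, hσ, rfl⟩ | ⟨σ, hσ, rfl⟩)
    · exact appendMax_mem_avoiders132231_iff.2 hσ
    · exact prependMax_mem_avoiders132231_iff.2 hσ

theorem sum_avoiders132231_succ {R : Type*} [CommSemiring R] {n : ℕ} (hn : 1 ≤ n) (q : R) :
    ∑ τ ∈ avoiders132231 (n + 1), q ^ invNum τ =
      (1 + q ^ n) * ∑ σ ∈ avoiders132231 n, q ^ invNum σ := by
  have hdisj : Disjoint ((avoiders132231 n).image appendMax)
      ((avoiders132231 n).image prependMax) := by
    simp only [disjoint_left, mem_image]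
    rintro _ ⟨σ, -, rfl⟩ ⟨σ', -, h⟩
    exact appendMax_ne_prependMax hn σ σ' h.symm
  rw [avoiders132231_succ, sum_union hdisj, sum_image appendMax_injective.injOn,
    sum_image prependMax_injective.injOn]
  simp only [invNum_appendMax, invNum_prependMax, pow_add, ← mul_sum]
  ring

theorem sum_avoiders132231_one {R : Type*} [CommSemiring R] (q : R) :
    ∑ σ ∈ avoiders132231 1, q ^ invNum σ = 1 := by
  have : avoiders132231 1 = univ :=
    filter_true_of_mem fun σ _ => ⟨permAvoids_of_lt (by norm_num), permAvoids_of_lt (by norm_num)⟩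
  simp [this, invNum_eq_sum]

theorem inv_132_231 (n : ℕ) (hn : 1 ≤ n) (q : ℚ) :
    ∑ σ ∈ Finset.univ.filter
        (fun σ : Equiv.Perm (Fin n) => permAvoids σ p132 ∧ permAvoids σ p231),
      q ^ invNum σ = ∏ i ∈ Finset.range (n - 1), (1 + q ^ (i + 1)) := by
  change ∑ σ ∈ avoiders132231 n, q ^ invNum σ = _
  induction n, hn using Nat.le_induction with
  | base => simp [sum_avoiders132231_one]
  | succ n hn ih =>
    obtain ⟨k, rfl⟩ := Nat.exists_eq_add_of_le' hn
    rw [sum_avoiders132231_succ hn, ih]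
    simp only [Nat.add_sub_cancel, prod_range_succ]
    ring
end

section
/- For all n ≥ 1, Σ_{σ ∈ Av_n(132,321)} q^{inv σ} = 1 + Σ_{k=1}^{n-1} (q^{k(n-k+1)} − q^k)/(q^k − 1), where Av_n(132,321) is the set of permutations of {1,…,n} avoiding both 132 and 321. Equivalently, Σ_{σ ∈ Av_n(132,321)} q^{inv σ} = 1 + Σ_{k=1}^{n-1} Σ_{j=1}^{n-k} q^{jk}. -/
open scoped Classical

/-! Let `σ` avoid `132` and `321`, and put `k = σ 0`. Through the entry `σ 0`, a `321` forces the
entries below `k` to appear in increasing order and a `132` forces the same for the entries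
above `k`; a further `132` shows that the positions of the entries below `k` form an interval
`[j, j + k)`. Two permutations that are increasing on these two classes of positions and have
the same interval induce the same order on positions, hence coincide. So `σ` is the block swap
`k, …, k + j - 1, 0, …, k - 1, j + k, …, n - 1`, whose inversions are the `j * k` pairs of a
position before `j` with one in `[j, j + k)`. -/

open Equiv

theorem Equiv.eq_of_forall_lt_iff {α β : Type*} [LinearOrder β] [WellFoundedLT β]
    {σ τ : α ≃ β} (h : ∀ a b, σ a < σ b ↔ τ a < τ b) : σ = τ := by
  have hmono : StrictMono (τ.symm.trans σ) := fun x y hxy => by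
    simpa [h] using hxy
  have := Subsingleton.elim (hmono.orderIsoOfSurjective _ (τ.symm.trans σ).surjective)
    (OrderIso.refl β)
  ext a
  simpa using DFunLike.congr_fun this (τ a)

theorem permContains_of_lt {n : ℕ} {σ : Perm (Fin n)} {π : Perm (Fin 3)} {a b c : Fin n}
    (hab : a < b) (hbc : b < c)
    (h : ∀ i j, π i < π j ↔ σ (![a, b, c] i) < σ (![a, b, c] j)) : permContains σ π := by
  refine ⟨![a, b, c], Fin.strictMono_iff_lt_succ.2 fun i => ?_, h⟩
  fin_cases i
  exacts [hab, hbc]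

theorem lt_of_permAvoids_p132 {n : ℕ} {σ : Perm (Fin n)} (h : permAvoids σ p132) {a b c : Fin n}
    (hab : a < b) (hbc : b < c) (hac : σ a < σ c) : σ b < σ c := by
  refine (le_of_not_gt fun hcb => h (permContains_of_lt hab hbc ?_)).lt_of_ne
    (σ.injective.ne hbc.ne)
  intro i j
  fin_cases i <;> fin_cases j <;> simp [p132, Equiv.swap_apply_def] <;> order

theorem lt_of_permAvoids_p321 {n : ℕ} {σ : Perm (Fin n)} (h : permAvoids σ p321) {a b c : Fin n}
    (hab : a < b) (hbc : b < c) (hba : σ b < σ a) : σ b < σ c := by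
  refine (le_of_not_gt fun hcb => h (permContains_of_lt hab hbc ?_)).lt_of_ne
    (σ.injective.ne hbc.ne)
  intro i j
  fin_cases i <;> fin_cases j <;> simp [p321, Equiv.swap_apply_def] <;> order

theorem lt_iff_of_strictMonoOn_lt_of_strictMonoOn_le {α β : Type*} [LinearOrder α]
    [LinearOrder β] {f : α → β} {v : β} (hlt : StrictMonoOn f {p | f p < v})
    (hle : StrictMonoOn f {p | v ≤ f p}) (a b : α) :
    f a < f b ↔ (f a < v ∧ ¬ f b < v) ∨ ((f a < v ↔ f b < v) ∧ a < b) := by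
  by_cases ha : f a < v <;> by_cases hb : f b < v
  · simp [ha, hb, hlt.lt_iff_lt ha hb]
  · simpa [ha, hb] using ha.trans_le (not_lt.1 hb)
  · simpa [ha, hb] using (hb.trans_le (not_lt.1 ha)).le
  · simp [ha, hb, hle.lt_iff_lt (not_lt.1 ha) (not_lt.1 hb)]

section Avoiders

variable {n : ℕ} {σ : Perm (Fin (n + 1))}

theorem ne_zero_of_lt_apply_zero {p : Fin (n + 1)} (hp : σ p < σ 0) : p ≠ 0 := by
  rintro rfl
  exact hp.false

theorem strictMonoOn_lt_apply_zero (h321 : permAvoids σ p321) :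
    StrictMonoOn σ {p | σ p < σ 0} := fun _ ha _ _ hab =>
  lt_of_permAvoids_p321 h321 (Fin.pos_of_ne_zero (ne_zero_of_lt_apply_zero ha)) hab ha

theorem strictMonoOn_apply_zero_le (h132 : permAvoids σ p132) :
    StrictMonoOn σ {p | σ 0 ≤ σ p} := by
  intro a _ b hb hab
  have h0b : σ 0 < σ b := (hb : σ 0 ≤ σ b).lt_of_ne (σ.injective.ne (a.zero_le.trans_lt hab).ne)
  rcases a.zero_le.eq_or_lt with rfl | h0a
  · exact h0b
  · exact lt_of_permAvoids_p132 h132 h0a hab h0b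

theorem lt_apply_zero_of_le_of_le (h132 : permAvoids σ p132) (h321 : permAvoids σ p321)
    {a b c : Fin (n + 1)} (ha : σ a < σ 0) (hc : σ c < σ 0) (hab : a ≤ b) (hbc : b ≤ c) :
    σ b < σ 0 := by
  rcases hab.eq_or_lt with rfl | hab
  · exact ha
  rcases hbc.eq_or_lt with rfl | hbc
  · exact hc
  have hac : σ a < σ c := strictMonoOn_lt_apply_zero h321 ha hc (hab.trans hbc)
  exact (lt_of_permAvoids_p132 h132 hab hbc hac).trans hc

theorem exists_lt_apply_zero_iff_mem_Icc (h132 : permAvoids σ p132) (h321 : permAvoids σ p321)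
    (hne : ∃ p, σ p < σ 0) : ∃ a b : Fin (n + 1), ∀ p, σ p < σ 0 ↔ a ≤ p ∧ p ≤ b := by
  set S := Finset.univ.filter fun p => σ p < σ 0
  have hS : S.Nonempty := by simpa [S, Finset.filter_nonempty_iff] using hne
  have hmem : ∀ p, p ∈ S ↔ σ p < σ 0 := by simp [S]
  refine ⟨S.min' hS, S.max' hS, fun p => ⟨fun hp => ?_, fun ⟨hap, hpb⟩ => ?_⟩⟩
  · exact ⟨S.min'_le p ((hmem p).2 hp), S.le_max' p ((hmem p).2 hp)⟩
  · exact lt_apply_zero_of_le_of_le h132 h321 ((hmem _).1 (S.min'_mem hS))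
      ((hmem _).1 (S.max'_mem hS)) hap hpb

theorem eq_of_lt_apply_zero_iff {τ : Perm (Fin (n + 1))}
    (hσ132 : permAvoids σ p132) (hσ321 : permAvoids σ p321)
    (hτ132 : permAvoids τ p132) (hτ321 : permAvoids τ p321)
    (h : ∀ p, σ p < σ 0 ↔ τ p < τ 0) : σ = τ :=
  Equiv.eq_of_forall_lt_iff fun a b => by
    rw [lt_iff_of_strictMonoOn_lt_of_strictMonoOn_le (strictMonoOn_lt_apply_zero hσ321)
        (strictMonoOn_apply_zero_le hσ132),
      lt_iff_of_strictMonoOn_lt_of_strictMonoOn_le (strictMonoOn_lt_apply_zero hτ321)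
        (strictMonoOn_apply_zero_le hτ132), h a, h b]

end Avoiders

/-- In one-line notation `k, k + 1, …, k + j - 1, 0, 1, …, k - 1, j + k, …, n - 1`; the identity
when `j + k > n`. -/
def blockSwapFun (n j k : ℕ) (i : Fin n) : Fin n :=
  if h : j + k ≤ n then
    ⟨if (i : ℕ) < j then i + k else if (i : ℕ) < j + k then i - j else i, by split_ifs <;> omega⟩
  else i

theorem blockSwapFun_leftInverse (n j k : ℕ) :
    Function.LeftInverse (blockSwapFun n k j) (blockSwapFun n j k) := by
  intro i
  unfold blockSwapFun
  by_cases h : j + k ≤ n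
  · rw [dif_pos h, dif_pos (by omega)]
    ext
    simp only
    split_ifs <;> omega
  · rw [dif_neg h, dif_neg (by omega)]

def blockSwap (n j k : ℕ) : Perm (Fin n) :=
  ⟨blockSwapFun n j k, blockSwapFun n k j, blockSwapFun_leftInverse n j k,
    blockSwapFun_leftInverse n k j⟩

section BlockSwap

variable {n j k : ℕ}

theorem blockSwap_symm : (blockSwap n j k).symm = blockSwap n k j := rfl

theorem blockSwap_val (h : j + k ≤ n) (i : Fin n) :
    (blockSwap n j k i : ℕ) =
      if (i : ℕ) < j then i + k else if (i : ℕ) < j + k then i - j else i := by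
  simp [blockSwap, blockSwapFun, h]

theorem blockSwap_eq_one (h : j = 0 ∨ k = 0) : blockSwap n j k = 1 := by
  ext i
  by_cases hjk : j + k ≤ n
  · rw [blockSwap_val hjk]
    simp only [Perm.one_apply]
    split_ifs <;> omega
  · simp [blockSwap, blockSwapFun, hjk]

theorem blockSwap_val_zero (hj : 0 < j) (h : j + k ≤ n) :
    (blockSwap n j k ⟨0, by omega⟩ : ℕ) = k := by
  simp [blockSwap_val h, hj]

theorem blockSwap_inj {j' k' : ℕ} (hj : 0 < j) (hk : 0 < k) (h : j + k ≤ n) (hj' : 0 < j')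
    (hk' : 0 < k') (h' : j' + k' ≤ n) (he : blockSwap n j k = blockSwap n j' k') :
    j = j' ∧ k = k' := by
  have hkk' : k = k' := by
    simpa [blockSwap_val_zero hj h, blockSwap_val_zero hj' h'] using
      congrArg (fun σ : Perm (Fin n) => (σ ⟨0, by omega⟩ : ℕ)) he
  have hjj' : j = j' := by
    have he' := congrArg Equiv.symm he
    rw [blockSwap_symm, blockSwap_symm] at he'
    simpa [blockSwap_val_zero (n := n) (k := j) hk (by omega),
      blockSwap_val_zero (n := n) (k := j') hk' (by omega)] using
      congrArg (fun σ : Perm (Fin n) => (σ ⟨0, by omega⟩ : ℕ)) he'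
  exact ⟨hjj', hkk'⟩

theorem blockSwap_ne_one (hj : 0 < j) (hk : 0 < k) (h : j + k ≤ n) : blockSwap n j k ≠ 1 := by
  intro he
  refine hk.ne' ?_
  simpa [blockSwap_val_zero hj h] using
    congrArg (fun σ : Perm (Fin n) => (σ ⟨0, by omega⟩ : ℕ)) he

theorem blockSwap_permAvoids_p132 (h : j + k ≤ n) : permAvoids (blockSwap n j k) p132 := by
  rintro ⟨f, hf, hpat⟩
  have h01 : f 0 < f 1 := hf (by decide)
  have h12 : f 1 < f 2 := hf (by decide)
  have h1 := (hpat 0 1).1 (by decide)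
  have h2 := (hpat 2 1).1 (by decide)
  have h3 := (hpat 0 2).1 (by decide)
  simp only [Fin.lt_def, blockSwap_val h] at h01 h12 h1 h2 h3
  have := (f 2).isLt
  split_ifs at h1 h2 h3 <;> omega

theorem blockSwap_permAvoids_p321 (h : j + k ≤ n) : permAvoids (blockSwap n j k) p321 := by
  rintro ⟨f, hf, hpat⟩
  have h01 : f 0 < f 1 := hf (by decide)
  have h12 : f 1 < f 2 := hf (by decide)
  have h1 := (hpat 1 0).1 (by decide)
  have h2 := (hpat 2 1).1 (by decide)
  simp only [Fin.lt_def, blockSwap_val h] at h01 h12 h1 h2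
  split_ifs at h1 h2 <;> omega

theorem card_filter_le_val_lt (a b : ℕ) (hb : b ≤ n) :
    (Finset.univ.filter fun i : Fin n => a ≤ (i : ℕ) ∧ (i : ℕ) < b).card = b - a := by
  rw [← Nat.card_Ico a b, ← Finset.card_map Fin.valEmbedding]
  congr 1
  ext m
  simp only [Finset.mem_map, Finset.mem_filter, Finset.mem_univ, true_and, Fin.valEmbedding_apply,
    Finset.mem_Ico]
  exact ⟨fun ⟨i, hi, hm⟩ => hm ▸ hi, fun hm => ⟨⟨m, by omega⟩, hm, rfl⟩⟩

theorem invNum_blockSwap (h : j + k ≤ n) : invNum (blockSwap n j k) = j * k := by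
  have hinv : (Finset.univ.filter fun p : Fin n × Fin n =>
        p.1 < p.2 ∧ blockSwap n j k p.2 < blockSwap n j k p.1) =
      (Finset.univ.filter fun i : Fin n => 0 ≤ (i : ℕ) ∧ (i : ℕ) < j) ×ˢ
        (Finset.univ.filter fun i : Fin n => j ≤ (i : ℕ) ∧ (i : ℕ) < j + k) := by
    ext p
    simp only [Finset.mem_filter, Finset.mem_product, Finset.mem_univ, true_and, Fin.lt_def,
      blockSwap_val h]
    split_ifs <;> omega
  rw [invNum, hinv, Finset.card_product, card_filter_le_val_lt _ _ (by omega),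
    card_filter_le_val_lt _ _ h]
  simp

theorem blockSwap_lt_apply_zero_iff (hj : 0 < j) (h : j + k ≤ n + 1) (p : Fin (n + 1)) :
    blockSwap (n + 1) j k p < blockSwap (n + 1) j k 0 ↔ j ≤ p ∧ (p : ℕ) < j + k := by
  rw [Fin.lt_def, blockSwap_val h, blockSwap_val h]
  simp only [Fin.val_zero, hj, if_true]
  split_ifs <;> omega

end BlockSwap

theorem exists_eq_blockSwap {n : ℕ} {σ : Perm (Fin (n + 1))} (h132 : permAvoids σ p132)
    (h321 : permAvoids σ p321) : ∃ j k, j + k ≤ n + 1 ∧ σ = blockSwap (n + 1) j k := by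
  by_cases hne : ∃ p, σ p < σ 0
  · obtain ⟨a, b, hab⟩ := exists_lt_apply_zero_iff_mem_Icc h132 h321 hne
    have ha : 0 < (a : ℕ) := by simpa [Fin.pos_iff_ne_zero] using (hab 0).not.1 (lt_irrefl _)
    obtain ⟨p, hp⟩ := hne
    have hb : a ≤ b := ((hab p).1 hp).1.trans ((hab p).1 hp).2
    have hbn := b.isLt
    refine ⟨a, b - a + 1, by omega, eq_of_lt_apply_zero_iff h132 h321
      (blockSwap_permAvoids_p132 (by omega)) (blockSwap_permAvoids_p321 (by omega)) fun p => ?_⟩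
    rw [hab, blockSwap_lt_apply_zero_iff ha (by omega), Fin.le_def, Fin.le_def]
    omega
  · refine ⟨1, 0, by omega, eq_of_lt_apply_zero_iff h132 h321
      (blockSwap_permAvoids_p132 (by omega)) (blockSwap_permAvoids_p321 (by omega)) fun p => ?_⟩
    rw [blockSwap_lt_apply_zero_iff one_pos (by omega)]
    exact iff_of_false (fun hp => hne ⟨p, hp⟩) (by omega)

theorem permAvoids_p132_p321_iff {n : ℕ} (σ : Perm (Fin n)) :
    permAvoids σ p132 ∧ permAvoids σ p321 ↔ ∃ j k, j + k ≤ n ∧ σ = blockSwap n j k := by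
  refine ⟨fun ⟨h132, h321⟩ => ?_, fun ⟨j, k, h, hσ⟩ => hσ ▸
    ⟨blockSwap_permAvoids_p132 h, blockSwap_permAvoids_p321 h⟩⟩
  cases n with
  | zero => exact ⟨0, 0, le_rfl, Subsingleton.elim _ _⟩
  | succ n => exact exists_eq_blockSwap h132 h321

def blockSwapParams (n : ℕ) : Finset ((_ : ℕ) × ℕ) :=
  (Finset.Icc 1 (n - 1)).sigma fun k => Finset.Icc 1 (n - k)

section BlockSwapParams

variable {n : ℕ}

theorem mem_blockSwapParams {x : (_ : ℕ) × ℕ} :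
    x ∈ blockSwapParams n ↔ 0 < x.2 ∧ 0 < x.1 ∧ x.2 + x.1 ≤ n := by
  simp only [blockSwapParams, Finset.mem_sigma, Finset.mem_Icc]
  omega

theorem filter_permAvoids_p132_p321_eq :
    Finset.univ.filter (fun σ : Perm (Fin n) => permAvoids σ p132 ∧ permAvoids σ p321)
      = insert 1 ((blockSwapParams n).image fun x => blockSwap n x.2 x.1) := by
  ext σ
  simp only [Finset.mem_filter, Finset.mem_univ, true_and, permAvoids_p132_p321_iff,
    Finset.mem_insert, Finset.mem_image]
  constructor
  · rintro ⟨j, k, hjk, rfl⟩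
    by_cases h0 : j = 0 ∨ k = 0
    · exact .inl (blockSwap_eq_one h0)
    · exact .inr ⟨⟨k, j⟩, mem_blockSwapParams.2 (by dsimp only; omega), rfl⟩
  · rintro (rfl | ⟨x, hx, rfl⟩)
    · exact ⟨0, 0, by omega, (blockSwap_eq_one (.inl rfl)).symm⟩
    · exact ⟨x.2, x.1, (mem_blockSwapParams.1 hx).2.2, rfl⟩

theorem one_notMem_image_blockSwapParams :
    (1 : Perm (Fin n)) ∉ (blockSwapParams n).image fun x => blockSwap n x.2 x.1 := by
  simp only [Finset.mem_image, not_exists, not_and]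
  intro x hx
  obtain ⟨h2, h1, h⟩ := mem_blockSwapParams.1 hx
  exact blockSwap_ne_one h2 h1 h

theorem injOn_blockSwapParams :
    Set.InjOn (fun x : (_ : ℕ) × ℕ => blockSwap n x.2 x.1) (blockSwapParams n) := by
  intro x hx y hy hxy
  obtain ⟨hx2, hx1, hx⟩ := mem_blockSwapParams.1 hx
  obtain ⟨hy2, hy1, hy⟩ := mem_blockSwapParams.1 hy
  obtain ⟨h2, h1⟩ := blockSwap_inj hx2 hx1 hx hy2 hy1 hy hxy
  exact Sigma.ext h1 (heq_of_eq h2)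

end BlockSwapParams

theorem inv_132_321_general (n : ℕ) (q : ℚ) :
    ∑ σ ∈ Finset.univ.filter
        (fun σ : Equiv.Perm (Fin n) => permAvoids σ p132 ∧ permAvoids σ p321),
      q ^ invNum σ
      = 1 + ∑ k ∈ Finset.Icc 1 (n - 1), ∑ j ∈ Finset.Icc 1 (n - k), q ^ (j * k) := by
  have hinv_one : invNum (1 : Perm (Fin n)) = 0 := by
    rw [← blockSwap_eq_one (j := 0) (k := 0) (.inl rfl), invNum_blockSwap (by omega)]
  rw [filter_permAvoids_p132_p321_eq, Finset.sum_insert one_notMem_image_blockSwapParams,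
    Finset.sum_image injOn_blockSwapParams, Finset.sum_sigma', hinv_one, pow_zero]
  refine congrArg (1 + ·) (Finset.sum_congr rfl fun x hx => ?_)
  rw [invNum_blockSwap (mem_blockSwapParams.1 hx).2.2]

theorem inv_132_321 (n : ℕ) (hn : 1 ≤ n) (q : ℚ) :
    ∑ σ ∈ Finset.univ.filter
        (fun σ : Equiv.Perm (Fin n) => permAvoids σ p132 ∧ permAvoids σ p321),
      q ^ invNum σ
      = 1 + ∑ k ∈ Finset.Icc 1 (n - 1), ∑ j ∈ Finset.Icc 1 (n - k), q ^ (j * k) :=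
  inv_132_321_general n q
end

section
/- For all n ≥ 0, Σ_{σ ∈ Av_n(132,213)} q^{maj σ} t^{des σ} = (1+qt)(1+q^2 t)⋯(1+q^{n-1} t), where des σ = #Des σ and maj σ = Σ_{i∈Des σ} i. -/
open scoped Classical

/-! A permutation avoiding 132 and 213 is reverse layered: its descents cut it into increasing runs
of consecutive values, the runs decreasing from left to right (as in `789|456|123`). Indeed, for
`i < j` we have `σ j < σ i` exactly when a descent lies in `(i, j]`: without one the values
increase, and next to a descent at `d` a value on the wrong side of `σ d` would complete a 132 or
a 213. A permutation is determined by the relative order of its values, and for every set of cuts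
the reverse layered permutation exists (rank the positions by that order) and avoids both
patterns. So the descent set is a bijection onto the subsets `S` of `{1, …, n-1}`, and
`∑_S q^(∑ S) t^#S = ∏_{0<i<n} (1 + q^i t)`. -/

open Finset

section

variable {n : ℕ}

theorem Equiv.Perm.eq_of_lt_iff_lt {σ τ : Equiv.Perm (Fin n)}
    (h : ∀ i j, σ i < σ j ↔ τ i < τ j) : σ = τ := by
  have hmono : StrictMono (σ ∘ τ.symm) := fun a b hab => by
    simpa using (h (τ.symm a) (τ.symm b)).2 (by simpa using hab)
  have hid : σ ∘ τ.symm = id :=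
    (hmono.range_inj strictMono_id).1 (by simp [(σ.surjective.comp τ.symm.surjective).range_eq])
  exact Equiv.ext fun i => by simpa using congrFun hid (τ i)

theorem exists_perm_lt_iff_lt_of_injective {α : Type*} [LinearOrder α] {f : Fin n → α}
    (hf : Function.Injective f) : ∃ σ : Equiv.Perm (Fin n), ∀ i j, σ i < σ j ↔ f i < f j := by
  have hsorted : StrictMono (f ∘ Tuple.sort f) :=
    (Tuple.monotone_sort f).strictMono_of_injective (hf.comp (Tuple.sort f).injective)
  refine ⟨(Tuple.sort f).symm, fun i j => ?_⟩
  simpa using (hsorted.lt_iff_lt (a := (Tuple.sort f).symm i) (b := (Tuple.sort f).symm j)).symm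

theorem permContains_p132 {σ : Equiv.Perm (Fin n)} {i j k : Fin n} (hij : i < j) (hjk : j < k)
    (hik : σ i < σ k) (hkj : σ k < σ j) : permContains σ p132 := by
  refine ⟨![i, j, k], ?_, ?_⟩
  · refine Fin.strictMono_iff_lt_succ.2 fun a => ?_
    fin_cases a <;> simpa
  · intro a b
    fin_cases a <;> fin_cases b <;> simp [p132, Equiv.swap_apply_def] <;> order

theorem permContains_p213 {σ : Equiv.Perm (Fin n)} {i j k : Fin n} (hij : i < j) (hjk : j < k)
    (hji : σ j < σ i) (hik : σ i < σ k) : permContains σ p213 := by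
  refine ⟨![i, j, k], Fin.strictMono_iff_lt_succ.2 fun a => ?_, fun a b => ?_⟩
  · fin_cases a <;> simpa
  · fin_cases a <;> fin_cases b <;> simp [p213, Equiv.swap_apply_def] <;> order

theorem Equiv.Perm.lt_iff_not_lt (σ : Equiv.Perm (Fin n)) {i j : Fin n} (hij : i ≠ j) :
    σ i < σ j ↔ ¬ σ j < σ i :=
  (σ.injective.ne hij).le_iff_lt.symm.trans not_lt.symm

theorem desSet_subset_Ico (σ : Equiv.Perm (Fin n)) : desSet σ ⊆ Ico 1 n :=
  filter_subset _ _

theorem succ_mem_desSet_iff {σ : Equiv.Perm (Fin n)} {m : ℕ} (hm : m + 1 < n) :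
    m + 1 ∈ desSet σ ↔ σ ⟨m + 1, hm⟩ < σ ⟨m, by omega⟩ := by
  simp [desSet, hm]

theorem le_of_forall_not_mem_desSet {σ : Equiv.Perm (Fin n)} {i j : Fin n} (hij : i ≤ j)
    (h : ∀ d ∈ desSet σ, ¬ ((i : ℕ) < d ∧ d ≤ j)) : σ i ≤ σ j := by
  obtain ⟨j, hj⟩ := j
  replace hij : (i : ℕ) ≤ j := hij
  induction j, hij using Nat.le_induction with
  | base => rfl
  | succ m him ih =>
    have hstep : σ ⟨m, by omega⟩ ≤ σ ⟨m + 1, hj⟩ :=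
      not_lt.1 fun hlt => h (m + 1) ((succ_mem_desSet_iff hj).2 hlt) ⟨by omega, le_rfl⟩
    exact (ih (by omega) fun d hd hid => h d hd ⟨hid.1, Nat.le_succ_of_le hid.2⟩).trans hstep

theorem lt_of_mem_desSet {σ : Equiv.Perm (Fin n)} (h132 : permAvoids σ p132)
    (h213 : permAvoids σ p213) {d : ℕ} (hd : d ∈ desSet σ) {i j : Fin n} (hid : (i : ℕ) < d)
    (hdj : d ≤ j) : σ j < σ i := by
  obtain ⟨m, rfl⟩ : ∃ m, d = m + 1 := ⟨d - 1, by grind [desSet_subset_Ico σ hd]⟩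
  have hm : m + 1 < n := by omega
  set a : Fin n := ⟨m, by omega⟩
  set b : Fin n := ⟨m + 1, hm⟩
  have hba : σ b < σ a := (succ_mem_desSet_iff hm).1 hd
  -- every value before the descent exceeds `σ b`, otherwise `i, a, b` is a 132
  have hbi : σ b < σ i := by
    rcases (show (i : ℕ) = m ∨ (i : ℕ) < m by omega) with him | him
    · rwa [show i = a from Fin.ext him]
    · refine (σ.lt_iff_not_lt (Fin.ne_of_val_ne (by simp [b]; omega))).2 fun hib => ?_
      exact h132 (permContains_p132 (j := a) (Fin.mk_lt_mk.2 him) (Fin.mk_lt_mk.2 (by omega))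
        hib hba)
  rcases (show (j : ℕ) = m + 1 ∨ m + 1 < j by omega) with hjm | hjm
  · rwa [show j = b from Fin.ext hjm]
  · refine (σ.lt_iff_not_lt (Fin.ne_of_val_ne (by omega))).2 fun hij => ?_
    exact h213 (permContains_p213 (j := b) (Fin.mk_lt_mk.2 (by omega)) (Fin.mk_lt_mk.2 hjm)
      hbi hij)

/-- The positions are cut into blocks just before each `d ∈ S` (so `d` separates the 0-based
positions `d - 1` and `d`, matching `desSet`); `σ` increases within a block and every block lies
below the previous one. -/
def IsReverseLayered (S : Finset ℕ) (σ : Equiv.Perm (Fin n)) : Prop :=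
  ∀ i j : Fin n, i < j → (σ j < σ i ↔ ∃ d ∈ S, (i : ℕ) < d ∧ d ≤ j)

theorem isReverseLayered_desSet {σ : Equiv.Perm (Fin n)} (h132 : permAvoids σ p132)
    (h213 : permAvoids σ p213) : IsReverseLayered (desSet σ) σ := fun _ _ hij =>
  ⟨fun hji => by_contra fun hno =>
      (le_of_forall_not_mem_desSet hij.le fun d hd hidj => hno ⟨d, hd, hidj⟩).not_gt hji,
    fun ⟨_, hd, hid, hdj⟩ => lt_of_mem_desSet h132 h213 hd hid hdj⟩

namespace IsReverseLayered

variable {S : Finset ℕ} {σ τ : Equiv.Perm (Fin n)}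

theorem permAvoids_p132 (hσ : IsReverseLayered S σ) : permAvoids σ p132 := by
  rintro ⟨f, hf, hpat⟩
  have h01 : f 0 < f 1 := hf (by decide)
  have h12 : f 1 < f 2 := hf (by decide)
  obtain ⟨d, hd, h1d, hd2⟩ := (hσ _ _ h12).1 ((hpat 2 1).1 (by decide))
  exact ((hσ _ _ (h01.trans h12)).2 ⟨d, hd, (Fin.lt_def.1 h01).trans h1d, hd2⟩).not_gt
    ((hpat 0 2).1 (by decide))

theorem permAvoids_p213 (hσ : IsReverseLayered S σ) : permAvoids σ p213 := by
  rintro ⟨f, hf, hpat⟩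
  have h01 : f 0 < f 1 := hf (by decide)
  have h12 : f 1 < f 2 := hf (by decide)
  obtain ⟨d, hd, h0d, hd1⟩ := (hσ _ _ h01).1 ((hpat 1 0).1 (by decide))
  exact ((hσ _ _ (h01.trans h12)).2 ⟨d, hd, h0d, hd1.trans (Fin.le_def.1 h12.le)⟩).not_gt
    ((hpat 0 2).1 (by decide))

theorem desSet_eq (hσ : IsReverseLayered S σ) (hS : S ⊆ Ico 1 n) : desSet σ = S := by
  ext d
  by_cases hd : d ∈ Ico 1 n
  · obtain ⟨m, rfl⟩ : ∃ m, d = m + 1 := ⟨d - 1, by grind⟩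
    have hm : m + 1 < n := by grind
    rw [succ_mem_desSet_iff hm, hσ ⟨m, by omega⟩ ⟨m + 1, hm⟩ (Fin.mk_lt_mk.2 (by omega))]
    constructor
    · rintro ⟨d, hd, hmd, hdm⟩
      rwa [show m + 1 = d by simp only at hmd hdm; omega]
    · exact fun h => ⟨m + 1, h, by simp⟩
  · exact iff_of_false (fun h => hd (desSet_subset_Ico σ h)) fun h => hd (hS h)

theorem eq (hσ : IsReverseLayered S σ) (hτ : IsReverseLayered S τ) : σ = τ := by
  refine Equiv.Perm.eq_of_lt_iff_lt fun i j => ?_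
  rcases lt_trichotomy i j with hij | rfl | hji
  · rw [σ.lt_iff_not_lt hij.ne, τ.lt_iff_not_lt hij.ne, hσ i j hij, hτ i j hij]
  · simp
  · rw [hσ j i hji, hτ j i hji]

end IsReverseLayered

theorem card_filter_le_lt_card_filter_le_iff (S : Finset ℕ) {i j : ℕ} (hij : i ≤ j) :
    #(S.filter (· ≤ i)) < #(S.filter (· ≤ j)) ↔ ∃ d ∈ S, i < d ∧ d ≤ j := by
  constructor
  · intro hlt
    by_contra! hno
    refine hlt.ne (congrArg card (filter_congr fun d hd => ?_))
    have := hno d hd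
    omega
  · rintro ⟨d, hd, hid, hdj⟩
    refine card_lt_card ⟨monotone_filter_right S fun _ _ h => h.trans hij, fun hsub => ?_⟩
    have := (mem_filter.1 (hsub (mem_filter.2 ⟨hd, hdj⟩))).2
    omega

theorem exists_isReverseLayered (S : Finset ℕ) :
    ∃ σ : Equiv.Perm (Fin n), IsReverseLayered S σ := by
  -- rank the positions by their number of cuts so far, decreasingly, then by position
  let key : Fin n → ℕᵒᵈ ×ₗ Fin n := fun i => toLex (OrderDual.toDual #(S.filter (· ≤ (i : ℕ))), i)
  have hkey : Function.Injective key := fun i j h => congrArg (fun p => (ofLex p).2) h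
  obtain ⟨σ, hσ⟩ := exists_perm_lt_iff_lt_of_injective hkey
  refine ⟨σ, fun i j hij => ?_⟩
  rw [hσ, ← card_filter_le_lt_card_filter_le_iff S (Fin.le_def.1 hij.le)]
  simp [key, Prod.Lex.toLex_lt_toLex, hij.not_gt]

theorem sum_avoiders_eq_sum_powerset {M : Type*} [AddCommMonoid M] (f : Finset ℕ → M) :
    ∑ σ ∈ univ.filter (fun σ : Equiv.Perm (Fin n) => permAvoids σ p132 ∧ permAvoids σ p213),
      f (desSet σ) = ∑ S ∈ (Ico 1 n).powerset, f S := by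
  refine sum_bij (fun σ _ => desSet σ) (fun σ _ => mem_powerset.2 (desSet_subset_Ico σ))
    (fun σ hσ τ hτ h => ?_) (fun S hS => ?_) fun _ _ => rfl
  · rw [mem_filter] at hσ hτ
    exact (isReverseLayered_desSet hσ.2.1 hσ.2.2).eq (h ▸ isReverseLayered_desSet hτ.2.1 hτ.2.2)
  · obtain ⟨σ, hσ⟩ := exists_isReverseLayered (n := n) S
    exact ⟨σ, mem_filter.2 ⟨mem_univ σ, hσ.permAvoids_p132, hσ.permAvoids_p213⟩,
      hσ.desSet_eq (mem_powerset.1 hS)⟩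

theorem sum_powerset_pow_sum_mul_pow_card {R : Type*} [CommSemiring R] (s : Finset ℕ) (q t : R) :
    ∑ T ∈ s.powerset, q ^ (∑ i ∈ T, i) * t ^ #T = ∏ i ∈ s, (1 + q ^ i * t) := by
  rw [prod_one_add]
  exact sum_congr rfl fun T _ => by rw [prod_mul_distrib, prod_pow_eq_pow_sum, prod_const]

end

theorem maj_des_132_213 (n : ℕ) (q t : ℚ) :
    ∑ σ ∈ Finset.univ.filter
        (fun σ : Equiv.Perm (Fin n) => permAvoids σ p132 ∧ permAvoids σ p213),
      q ^ majIdx σ * t ^ desNum σ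
      = ∏ i ∈ Finset.range (n - 1), (1 + q ^ (i + 1) * t) := by
  calc _ = ∑ S ∈ (Ico 1 n).powerset, q ^ (∑ i ∈ S, i) * t ^ #S :=
        sum_avoiders_eq_sum_powerset fun S => q ^ (∑ i ∈ S, i) * t ^ #S
    _ = ∏ i ∈ Ico 1 n, (1 + q ^ i * t) := sum_powerset_pow_sum_mul_pow_card _ q t
    _ = _ := by rw [prod_Ico_eq_prod_range]; simp only [add_comm 1]
end
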